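/- arXiv:2009.13172 — 6 statements merged into one kernel-verified Lean document; each statement's English description precedes it below -/
import Mathlib

section
/- For nonnegative integers a, a', b, b' with a ≠ b and a' ≠ b' and a + a' = b + b' (conservation), and nonzero parameters x, y with x ≠ y, one has (x/y)^a·(1 - x/y)·(y/x)^(a + a' - b') + ∑_{g=b'+1}^{a'-1} (x/y)^a·(1 - x/y)·(y/x)^(a + a' - g)·(1 - y/x) + (x/y)^a·(y/x)^a·(1 - y/x) = 0; moreover when a = b and a' = b' the unique term equals 1. -/
/-- Unitarity of the `R̃`-matrix of the column model for Grothendieck polynomials at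
`α = 0`, `β = -1`, whose entries are `R̃^{a,d}_{b,c}(x,y) = (x/y)^a · [0 if b < c; 1 if
b = c; 1 - x/y if b > c]`: composing two crossings gives the identity,
`∑_g R̃^{a,g}_{a',•}(x,y)·R̃^{g,b}_{•,b'}(y,x) = δ_{a,b}·δ_{a',b'}`.
The off-diagonal part (`a ≠ b`, `a' ≠ b'` — necessarily with `b' < a'` for a nonzero
summand) is the displayed vanishing sum, and in the diagonal case `a = b`, `a' = b'`
the unique contributing term equals `1`. -/
theorem groth_Rtilde_unitarity {F : Type*} [Field F]
    (x y : F) (hx : x ≠ 0) (hy : y ≠ 0) (hxy : x ≠ y) :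
    (∀ a a' b b' : ℕ, a ≠ b → a' ≠ b' → b' < a' → a + a' = b + b' →
      (x / y) ^ a * (1 - x / y) * (y / x) ^ (a + a' - b')
        + (∑ g ∈ Finset.Icc (b' + 1) (a' - 1),
            (x / y) ^ a * (1 - x / y) * (y / x) ^ (a + a' - g) * (1 - y / x))
        + (x / y) ^ a * (y / x) ^ a * (1 - y / x) = 0) ∧
    (∀ a : ℕ, (x / y) ^ a * (y / x) ^ a = 1) := by
  have huv : x / y * (y / x) = 1 := by field_simp
  have hpow : ∀ n : ℕ, (x / y) ^ n * (y / x) ^ n = 1 := fun n => by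
    rw [← mul_pow, huv, one_pow]
  refine ⟨?_, hpow⟩
  intro a a' b b' hab hab' hlt hcons
  set u := x / y with hu
  set v := y / x with hv
  obtain ⟨n, rfl⟩ : ∃ n, a' = b' + 1 + n := ⟨a' - b' - 1, by omega⟩
  have tel : ∀ d : ℕ, ∑ j ∈ Finset.range d, v ^ (a + 1 + j) * (1 - v)
      = v ^ (a + 1) - v ^ (a + 1 + d) := by
    intro d
    induction d with
    | zero => simp
    | succ d ih =>
        rw [Finset.sum_range_succ, ih]
        ring
  have hsum : ∑ g ∈ Finset.Icc (b' + 1) (b' + n),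
      u ^ a * (1 - u) * v ^ (a + (b' + 1 + n) - g) * (1 - v)
      = u ^ a * (1 - u) * (v ^ (a + 1) - v ^ (a + 1 + n)) := by
    rw [← Finset.Ico_add_one_right_eq_Icc, Finset.sum_Ico_eq_sum_range]
    rw [show b' + n + 1 - (b' + 1) = n from by omega]
    rw [← Finset.sum_range_reflect]
    rw [Finset.sum_congr rfl (fun j hj => by
      rw [show a + (b' + 1 + n) - (b' + 1 + (n - 1 - j)) = a + 1 + j from by
        have := Finset.mem_range.mp hj; omega])]
    simp_rw [mul_assoc (u ^ a * (1 - u))]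
    rw [← Finset.mul_sum, tel]
  rw [show a + (b' + 1 + n) - b' = a + 1 + n from by omega,
    show b' + 1 + n - 1 = b' + n from by omega, hsum]
  linear_combination (1 - u * v) * hpow a - huv
end

section
/- Let V = ⊕_{m≥0} ℂ|m⟩ and consider operators on ℂ²⊗V given by the L-matrix L(x) with entries: weight 1 for (a,b;c,d)=(0,0;0,0); (1+βx)/(1-αx) for a=0, b=d=m>0, c=0; (1+βx)/(1-αx) for a=0, c=1, d=b-1; x/(1-αx) for a=1, c=0, d=b+1; x/(1-αx) for a=c=1, b=d. Then the 5-vertex R-matrix R(x,y) with nonzero entries R^{00}_{00}=R^{11}_{11}=1, R^{01}_{10} = (1+βx)y/((1+βy)x), R^{10}_{01}=1, R^{10}_{10} = 1 - (1+βx)y/((1+βy)x) satisfies R₁₂(x,y)L₁(x)L₂(y) = L₂(y)L₁(x)R₁₂(x,y) on ℂ²⊗ℂ²⊗V. -/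
/-- The `L`-matrix of the fermionic row model for canonical Grothendieck polynomials:
`a, c ∈ {0,1}` are the left/right (horizontal) edge labels and `b, d ∈ ℕ` the
bottom/top (vertical) edge labels, subject to the conservation law `a + b = c + d`.
Weights: `1` for the empty vertex `(0,0;0,0)`; `(1+βx)/(1-αx)` when `a = 0` and the
bottom label is positive (covering `(0,m;0,m)` and `(0,m;1,m-1)`); `x/(1-αx)` when
`a = 1` (covering `(1,m;0,m+1)` and `(1,m;1,m)`). -/
def grothL {F : Type*} [Field F] (α β x : F) (a : Fin 2) (b : ℕ) (c : Fin 2) (d : ℕ) : F :=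
  if (a : ℕ) + b = (c : ℕ) + d then
    (if a = 1 then x / (1 - α * x)
     else if b = 0 then 1 else (1 + β * x) / (1 - α * x))
  else 0

/-- The five-vertex `R`-matrix, from input pair `(a,b)` to output pair `(c,d)`. -/
def grothR {F : Type*} [Field F] (β x y : F) (a b c d : Fin 2) : F :=
  if a = 0 ∧ b = 0 ∧ c = 0 ∧ d = 0 then 1
  else if a = 1 ∧ b = 1 ∧ c = 1 ∧ d = 1 then 1
  else if a = 0 ∧ b = 1 ∧ c = 1 ∧ d = 0 then ((1 + β * x) / (1 + β * y)) * (y / x)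
  else if a = 1 ∧ b = 0 ∧ c = 0 ∧ d = 1 then 1
  else if a = 1 ∧ b = 0 ∧ c = 1 ∧ d = 0 then 1 - ((1 + β * x) / (1 + β * y)) * (y / x)
  else 0

lemma sum_if_if {M : Type*} [AddCommMonoid M] (N v : ℕ) (P : ℕ → Prop) [DecidablePred P]
    (f : ℕ → M) :
    (∑ k ∈ Finset.range N, if P k then if v = k then f k else 0 else 0)
      = if v < N then (if P v then f v else 0) else 0 := by
  rw [Finset.sum_congr rfl (g := fun k => if v = k then (if P k then f k else 0) else 0)
      (fun k _ => by split_ifs <;> simp_all), Finset.sum_ite_eq]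
  simp [Finset.mem_range]

lemma sum_if_if2 {M : Type*} [AddCommMonoid M] (N v : ℕ) (P : ℕ → Prop) [DecidablePred P]
    (f : ℕ → M) :
    (∑ k ∈ Finset.range N, if P k then if v = 1 + k then f k else 0 else 0)
      = if 1 ≤ v then (if v - 1 < N then (if P (v - 1) then f (v - 1) else 0) else 0) else 0 := by
  rcases v with _ | v
  · rw [Finset.sum_eq_zero fun k _ => by split_ifs <;> first | rfl | (exfalso; omega)]
    simp
  · rw [Finset.sum_congr rfl (g := fun k => if v = k then (if P k then f k else 0) else 0)
        (fun k _ => by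
          have : (v + 1 = 1 + k) ↔ (v = k) := by omega
          split_ifs <;> simp_all), Finset.sum_ite_eq]
    simp [Finset.mem_range]

set_option maxHeartbeats 4000000 in
/-- The RLL relation `R₁₂(x,y) L₁(x) L₂(y) = L₂(y) L₁(x) R₁₂(x,y)` on `ℂ² ⊗ ℂ² ⊗ V`
for the row model of canonical Grothendieck polynomials, stated entrywise: for input
labels `(a, b, m)` and output labels `(c, d, n)`, both sides are finite sums over the
intermediate states (the intermediate vertical label `k` is bounded by `m + 1` thanks
to the conservation law, so summing `k` over `Finset.range (m + 2)` is exhaustive). -/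
theorem groth_RLL {F : Type*} [Field F] (α β x y : F)
    (hx : x ≠ 0) (hαx : 1 - α * x ≠ 0) (hαy : 1 - α * y ≠ 0)
    (hβx : 1 + β * x ≠ 0) (hβy : 1 + β * y ≠ 0) :
    ∀ (a b : Fin 2) (m : ℕ) (c d : Fin 2) (n : ℕ),
      (∑ a' : Fin 2, ∑ b' : Fin 2, ∑ k ∈ Finset.range (m + 2),
          grothR β x y a b a' b' * grothL α β x a' m c k * grothL α β y b' k d n)
        =
      (∑ a'' : Fin 2, ∑ b'' : Fin 2, ∑ k ∈ Finset.range (m + 2),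
          grothL α β y b m b'' k * grothL α β x a k a'' n * grothR β x y a'' b'' c d) := by
  intro a b m c d n
  fin_cases a <;> fin_cases b <;> fin_cases c <;> fin_cases d <;>
    (simp only [grothR, grothL, Fin.sum_univ_two, Fin.isValue]
     norm_num [sum_if_if, sum_if_if2]) <;>
    first
      | (refine Finset.sum_congr rfl fun k _ => ?_; ring)
      | (split_ifs <;>
          first
            | rfl
            | (exfalso; omega)
            | (field_simp [div_mul_div_comm] <;>
                first
                  | ring1
                  | (rw [div_eq_iff (by repeat' first | apply mul_ne_zero | assumption)]; ring1)
                  | (rw [eq_div_iff (by repeat' first | apply mul_ne_zero | assumption)]; ring1)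
                  | (have h1 : 1 - x * α ≠ 0 := by rwa [mul_comm]
                     have h2 : 1 - y * α ≠ 0 := by rwa [mul_comm]
                     have h3 : 1 + y * β ≠ 0 := by rwa [mul_comm]
                     ring_nf; field_simp; ring1))
            | norm_num)
end

section
/- For a horizontal strip λ/μ (i.e. μ ⊆ λ with λᵢ ≥ μᵢ ≥ λ_{i+1} for all i), the matrix element ⟨μ|T(x)|λ⟩ of the row transfer matrix for canonical Grothendieck polynomials equals (x/(1-αx))^{|λ/μ|} · ((1+βx)/(1-αx))^{r(μ/λ̄)}, where λ̄ = (λ₂, λ₃, …) and r(ν/κ) denotes the number of nonzero rows of the skew shape ν/κ; and ⟨μ|T(x)|λ⟩ = 0 if λ/μ is not a horizontal strip. -/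
/-- Vertex weights of the fermionic row model for canonical Grothendieck polynomials
`G^{(α,β)}`: `a, c` are the left/right horizontal edge labels (valued in `{0,1}`),
`b, d` the bottom/top vertical labels, with conservation `a + b = c + d`.
Weights: `1` for the all-zero vertex, `(1+βx)/(1-αx)` when the left label is `0` and the
bottom label is positive, and `x/(1-αx)` when the left label is `1`. -/
def grothRowWeight {F : Type*} [Field F] (α β x : F) (a b c d : ℕ) : F :=
  if a + b = c + d ∧ a ≤ 1 ∧ c ≤ 1 then
    (if a = 1 then x / (1 - α * x)
     else if b = 0 then 1 else (1 + β * x) / (1 - α * x))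
  else 0

/-- Partition function of a single row of `n` vertices with free left boundary, right
boundary label `r`, bottom vertical labels `bot` and top vertical labels `top`; the
horizontal edge labels range over `{0, …, B}`.  This is the matrix element
`⟨bot| T |top⟩` of a transfer matrix built from the weight function `w`. -/
def rowTransferElem {F : Type*} [Field F] (w : ℕ → ℕ → ℕ → ℕ → F)
    (n B : ℕ) (bot top : ℕ → ℕ) (r : ℕ) : F :=
  ∑ e : Fin (n + 1) → Fin (B + 1),
    if (e (Fin.last n) : ℕ) = r then
      ∏ j : Fin n, w (e j.castSucc) (bot j) (e j.succ) (top j)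
    else 0

/-- `mRow p N j` is the number of rows of the partition `p` of size `j + 1`
(`N` is a bound on the number of rows of `p`). -/
def mRow (p : ℕ → ℕ) (N j : ℕ) : ℕ :=
  ((Finset.range N).filter (fun i => p i = j + 1)).card

namespace GrothAux

/-- number of rows of `p` (among the first `N`) of size `> k`. -/
def cnt (p : ℕ → ℕ) (N k : ℕ) : ℕ := ((Finset.range N).filter (fun i => k < p i)).card

lemma cnt_lt_iff {p : ℕ → ℕ} (hp : ∀ i, p (i + 1) ≤ p i) (N k i : ℕ) :
    i < cnt p N k ↔ i < N ∧ k < p i := by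
  have hanti : Antitone p := antitone_nat_of_succ_le hp
  constructor
  · intro h
    by_contra hc
    have hsub : (Finset.range N).filter (fun i' => k < p i') ⊆ Finset.range i := by
      intro j hj
      simp only [Finset.mem_filter, Finset.mem_range] at hj ⊢
      rcases lt_or_ge j i with h' | h'
      · exact h'
      · exact absurd ⟨lt_of_le_of_lt h' hj.1, lt_of_lt_of_le hj.2 (hanti h')⟩ hc
    have h2 := Finset.card_le_card hsub
    simp only [Finset.card_range] at h2
    exact absurd (lt_of_lt_of_le h h2) (lt_irrefl i)
  · rintro ⟨hiN, hki⟩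
    have hsub : Finset.range (i + 1) ⊆ (Finset.range N).filter (fun i' => k < p i') := by
      intro j hj
      simp only [Finset.mem_range] at hj
      simp only [Finset.mem_filter, Finset.mem_range]
      have hji : j ≤ i := Nat.lt_succ_iff.mp hj
      exact ⟨lt_of_le_of_lt hji hiN, lt_of_lt_of_le hki (hanti hji)⟩
    have h2 := Finset.card_le_card hsub
    simp only [Finset.card_range] at h2
    exact lt_of_lt_of_le (Nat.lt_succ_self i) h2

lemma cnt_le_N (p : ℕ → ℕ) (N k : ℕ) : cnt p N k ≤ N :=
  le_trans (Finset.card_filter_le _ _) (le_of_eq (Finset.card_range N))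

lemma cnt_succ_le (p : ℕ → ℕ) (N k : ℕ) : cnt p N (k + 1) ≤ cnt p N k := by
  apply Finset.card_le_card
  intro i hi
  simp only [Finset.mem_filter, Finset.mem_range] at hi ⊢
  omega

lemma cnt_eq_zero {p : ℕ → ℕ} (hp : ∀ i, p (i + 1) ≤ p i) (N : ℕ) {k : ℕ} (hk : p 0 ≤ k) :
    cnt p N k = 0 := by
  have hanti : Antitone p := antitone_nat_of_succ_le hp
  unfold cnt
  rw [Finset.card_eq_zero, Finset.filter_eq_empty_iff]
  intro i _
  have : p i ≤ p 0 := hanti (Nat.zero_le i)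
  omega

lemma cnt_split (p : ℕ → ℕ) (N j : ℕ) :
    cnt p N j = mRow p N j + cnt p N (j + 1) := by
  unfold cnt mRow
  rw [← Finset.card_union_of_disjoint]
  · congr 1
    ext i
    simp only [Finset.mem_union, Finset.mem_filter, Finset.mem_range]
    omega
  · rw [Finset.disjoint_left]
    intro i hi1 hi2
    simp only [Finset.mem_filter, Finset.mem_range] at hi1 hi2
    omega

lemma sum_cnt {p : ℕ → ℕ} (hp : ∀ i, p (i + 1) ≤ p i) (N n : ℕ) (hn : p 0 ≤ n) :
    ∑ j ∈ Finset.range n, cnt p N j = ∑ i ∈ Finset.range N, p i := by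
  have hanti : Antitone p := antitone_nat_of_succ_le hp
  unfold cnt
  simp_rw [Finset.card_filter]
  rw [Finset.sum_comm]
  refine Finset.sum_congr rfl fun i _ => ?_
  rw [← Finset.card_filter]
  have h : (Finset.range n).filter (fun j => j < p i) = Finset.range (p i) := by
    ext j
    simp only [Finset.mem_filter, Finset.mem_range]
    have : p i ≤ n := le_trans (hanti (Nat.zero_le i)) hn
    omega
  rw [h, Finset.card_range]

end GrothAux

namespace GrothAux

lemma conservation {F : Type*} [Field F] (α β x : F) (lam mu : ℕ → ℕ) (N n : ℕ)
    (hlam : ∀ i, lam (i + 1) ≤ lam i) (hmu : ∀ i, mu (i + 1) ≤ mu i)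
    (hlamn : lam 0 ≤ n) (hmun : mu 0 ≤ n)
    (e : Fin (n + 1) → Fin (1 + 1)) (hlast : (e (Fin.last n) : ℕ) = 0)
    (hne : ∏ j : Fin n,
        grothRowWeight α β x (e j.castSucc) (mRow mu N j) (e j.succ) (mRow lam N j) ≠ 0) :
    ∀ k : Fin (n + 1), (e k : ℕ) + cnt mu N (k : ℕ) = cnt lam N (k : ℕ) := by
  classical
  set f : ℕ → ℕ := fun k => if h : k < n + 1 then (e ⟨k, h⟩ : ℕ) else 0 with hf
  have hfe : ∀ k : Fin (n + 1), f (k : ℕ) = (e k : ℕ) := by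
    intro k
    simp only [hf, dif_pos k.isLt, Fin.eta]
  have hcons : ∀ j, j < n → f j + mRow mu N j = f (j + 1) + mRow lam N j := by
    intro j hj
    have h := Finset.prod_ne_zero_iff.mp hne ⟨j, hj⟩ (Finset.mem_univ _)
    have h1 : f j = (e (Fin.castSucc ⟨j, hj⟩) : ℕ) := by
      rw [← hfe]; rfl
    have h2 : f (j + 1) = (e (Fin.succ ⟨j, hj⟩) : ℕ) := by
      rw [← hfe]; rfl
    rw [h1, h2]
    by_contra hc
    apply h
    unfold grothRowWeight
    rw [if_neg]
    rintro ⟨hcc, -, -⟩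
    exact hc hcc
  have hfn : f n = 0 := by
    have : f n = (e (Fin.last n) : ℕ) := by rw [← hfe]; rfl
    rw [this, hlast]
  have key : ∀ m, m ≤ n → f (n - m) + cnt mu N (n - m) = cnt lam N (n - m) := by
    intro m
    induction m with
    | zero =>
      intro _
      simp only [Nat.sub_zero, hfn,
        cnt_eq_zero hmu N (le_refl n |>.trans' hmun), cnt_eq_zero hlam N hlamn]
    | succ m ih =>
      intro hm
      have hih := ih (by omega)
      have hk : n - (m + 1) < n := by omega
      have hc := hcons (n - (m + 1)) hk
      have hnm : n - m = n - (m + 1) + 1 := by omega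
      rw [hnm] at hih
      have hml := cnt_split lam N (n - (m + 1))
      have hmm := cnt_split mu N (n - (m + 1))
      omega
  intro k
  have hk : (k : ℕ) ≤ n := by omega
  have := key (n - (k : ℕ)) (by omega)
  have hnk : n - (n - (k : ℕ)) = (k : ℕ) := by omega
  rw [hnk, hfe] at this
  exact this

end GrothAux

namespace GrothAux

lemma cnt_mono_strip {lam mu : ℕ → ℕ} (h1 : ∀ i, mu i ≤ lam i) (N k : ℕ) :
    cnt mu N k ≤ cnt lam N k := by
  apply Finset.card_le_card
  intro i hi
  simp only [Finset.mem_filter, Finset.mem_range] at hi ⊢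
  exact ⟨hi.1, lt_of_lt_of_le hi.2 (h1 i)⟩

lemma cnt_le_succ_strip {lam mu : ℕ → ℕ} (hlam : ∀ i, lam (i + 1) ≤ lam i)
    (hmu : ∀ i, mu (i + 1) ≤ mu i) (h2 : ∀ i, lam (i + 1) ≤ mu i) (N k : ℕ) :
    cnt lam N k ≤ cnt mu N k + 1 := by
  by_contra hc
  push_neg at hc
  have h3 : cnt mu N k + 1 < cnt lam N k := hc
  have h4 := (cnt_lt_iff hlam N k (cnt mu N k + 1)).mp h3
  have h5 : ¬ (cnt mu N k < cnt mu N k) := lt_irrefl _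
  rw [cnt_lt_iff hmu N k] at h5
  push_neg at h5
  have h6 : mu (cnt mu N k) ≤ k := h5 (by omega)
  have h7 := h2 (cnt mu N k)
  omega

/-- Count C: the number of `j < n` where the counts differ is `|λ| - |μ|`. -/
lemma countC {lam mu : ℕ → ℕ} (hlam : ∀ i, lam (i + 1) ≤ lam i)
    (hmu : ∀ i, mu (i + 1) ≤ mu i) (h1 : ∀ i, mu i ≤ lam i) (h2 : ∀ i, lam (i + 1) ≤ mu i)
    (N n : ℕ) (hlamn : lam 0 ≤ n) (hmun : mu 0 ≤ n) :
    ((Finset.range n).filter (fun j => cnt lam N j ≠ cnt mu N j)).card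
      = ∑ i ∈ Finset.range N, (lam i - mu i) := by
  rw [Finset.card_filter]
  have hcong : ∀ j ∈ Finset.range n,
      (if cnt lam N j ≠ cnt mu N j then 1 else 0) = cnt lam N j - cnt mu N j := by
    intro j _
    have ha := cnt_mono_strip h1 N j
    have hb := cnt_le_succ_strip hlam hmu h2 N j
    split <;> omega
  rw [Finset.sum_congr rfl hcong,
    Finset.sum_tsub_distrib _ (fun j _ => cnt_mono_strip h1 N j),
    sum_cnt hlam N n hlamn, sum_cnt hmu N n hmun,
    Finset.sum_tsub_distrib _ (fun i _ => h1 i)]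

/-- Count D: bijection between marked rows and sites with equal counts and a μ-part. -/
lemma countD {lam mu : ℕ → ℕ} (hlam : ∀ i, lam (i + 1) ≤ lam i)
    (hmu : ∀ i, mu (i + 1) ≤ mu i) (h1 : ∀ i, mu i ≤ lam i) (h2 : ∀ i, lam (i + 1) ≤ mu i)
    (N n : ℕ) (hlamN : ∀ i, N ≤ i → lam i = 0) (hmuN : ∀ i, N ≤ i → mu i = 0)
    (hmun : mu 0 ≤ n) :
    ((Finset.range N).filter (fun i => lam (i + 1) < mu i)).card
      = ((Finset.range n).filter
          (fun j => cnt lam N j = cnt mu N j ∧ mRow mu N j ≠ 0)).card := by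
  have hmanti : Antitone mu := antitone_nat_of_succ_le hmu
  apply Finset.card_bij (fun i _ => mu i - 1)
  · -- maps into target
    intro i hi
    simp only [Finset.mem_filter, Finset.mem_range] at hi ⊢
    obtain ⟨hiN, hstrict⟩ := hi
    have hpos : 0 < mu i := by omega
    have hin : mu i ≤ n := le_trans (hmanti (Nat.zero_le i)) hmun
    refine ⟨by omega, ?_, ?_⟩
    · -- cnt lam = cnt mu = i + 1 at j = mu i - 1
      have hml : mu (i + 1) ≤ lam (i + 1) := h1 (i + 1)
      have hcm1 : i < cnt mu N (mu i - 1) :=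
        (cnt_lt_iff hmu N _ i).mpr ⟨hiN, by omega⟩
      have hcm2 : ¬ (i + 1 < cnt mu N (mu i - 1)) := by
        rw [cnt_lt_iff hmu N]
        rintro ⟨-, hlt⟩
        have := h2 i
        have := h1 (i + 1)
        omega
      have hcl1 : i < cnt lam N (mu i - 1) :=
        (cnt_lt_iff hlam N _ i).mpr ⟨hiN, by have := h1 i; omega⟩
      have hcl2 : ¬ (i + 1 < cnt lam N (mu i - 1)) := by
        rw [cnt_lt_iff hlam N]
        rintro ⟨-, hlt⟩
        have := h2 i
        omega
      omega
    · -- mRow mu N (mu i - 1) ≠ 0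
      have hmem : i ∈ (Finset.range N).filter (fun i' => mu i' = (mu i - 1) + 1) := by
        simp only [Finset.mem_filter, Finset.mem_range]
        exact ⟨hiN, by omega⟩
      unfold mRow
      exact Finset.card_ne_zero_of_mem hmem
  · -- injective
    intro i1 hi1 i2 hi2 heq
    simp only [Finset.mem_filter, Finset.mem_range] at hi1 hi2
    by_contra hne
    wlog hlt : i1 < i2 generalizing i1 i2
    · exact this i2 i1 heq.symm hi2 hi1 (Ne.symm hne) (by omega)
    have hp1 : 0 < mu i1 := by omega
    have hp2 : 0 < mu i2 := by omega
    have hmeq : mu i1 = mu i2 := by omega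
    have : mu i2 ≤ mu (i1 + 1) := hmanti (by omega)
    have := h1 (i1 + 1)
    have := h2 i1
    omega
  · -- surjective
    intro j hj
    simp only [Finset.mem_filter, Finset.mem_range] at hj
    obtain ⟨hjn, hceq, hm⟩ := hj
    have hex : ∃ i0, i0 ∈ (Finset.range N).filter (fun i' => mu i' = j + 1) := by
      rcases Finset.card_ne_zero.mp hm with ⟨i0, hi0⟩
      exact ⟨i0, hi0⟩
    obtain ⟨i0, hi0⟩ := hex
    simp only [Finset.mem_filter, Finset.mem_range] at hi0
    have hi0r : i0 < cnt mu N j := (cnt_lt_iff hmu N j i0).mpr ⟨hi0.1, by omega⟩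
    set r := cnt mu N j with hr
    have hrN : r ≤ N := cnt_le_N mu N j
    have hrpos : 0 < r := by omega
    -- mu (r-1) = j + 1
    have hlt : r - 1 < r := by omega
    have hmu1 : j < mu (r - 1) := ((cnt_lt_iff hmu N j (r - 1)).mp hlt).2
    have hmu2 : mu (r - 1) ≤ mu i0 := hmanti (by omega)
    have hmur : mu (r - 1) = j + 1 := by omega
    -- lam r ≤ j
    have hlr : lam r ≤ j := by
      by_cases hrN' : r < N
      · have : ¬ (r < cnt lam N j) := by rw [hceq, hr]; omega
        rw [cnt_lt_iff hlam N j r] at this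
        push_neg at this
        exact this hrN'
      · rw [hlamN r (by omega)]; omega
    refine ⟨r - 1, ?_, by omega⟩
    simp only [Finset.mem_filter, Finset.mem_range]
    have : r - 1 + 1 = r := by omega
    rw [this]
    exact ⟨by omega, by omega⟩

end GrothAux

open GrothAux

/-- For a horizontal strip `λ/μ`, the matrix element `⟨μ|T(x)|λ⟩` of the row transfer
matrix for canonical Grothendieck polynomials (partitions encoded by row multiplicities,
bottom `μ`, top `λ`, right boundary `0`) equals
`(x/(1-αx))^{|λ/μ|} ((1+βx)/(1-αx))^{r(μ/λ̄)}` where `λ̄ = (λ₂, λ₃, …)` and `r(μ/λ̄)` is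
the number of nonzero rows of `μ/λ̄`, i.e. the number of `i` with `μᵢ > λ_{i+1}`;
and the matrix element vanishes when `λ/μ` is not a horizontal strip. -/
theorem groth_transfer_matrix_element {F : Type*} [Field F] (α β x : F)
    (lam mu : ℕ → ℕ) (hlam : ∀ i, lam (i + 1) ≤ lam i) (hmu : ∀ i, mu (i + 1) ≤ mu i)
    (N : ℕ) (hlamN : ∀ i, N ≤ i → lam i = 0) (hmuN : ∀ i, N ≤ i → mu i = 0)
    (n : ℕ) (hlamn : lam 0 ≤ n) (hmun : mu 0 ≤ n) :
    (((∀ i, mu i ≤ lam i) ∧ (∀ i, lam (i + 1) ≤ mu i)) →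
      rowTransferElem (grothRowWeight α β x) n 1 (mRow mu N) (mRow lam N) 0
        = (x / (1 - α * x)) ^ (∑ i ∈ Finset.range N, (lam i - mu i)) *
          ((1 + β * x) / (1 - α * x)) ^
            (((Finset.range N).filter (fun i => lam (i + 1) < mu i)).card)) ∧
    (¬ ((∀ i, mu i ≤ lam i) ∧ (∀ i, lam (i + 1) ≤ mu i)) →
      rowTransferElem (grothRowWeight α β x) n 1 (mRow mu N) (mRow lam N) 0 = 0) := by
  classical
  constructor
  · rintro ⟨h1, h2⟩
    have hml : ∀ k, cnt mu N k ≤ cnt lam N k := fun k => cnt_mono_strip h1 N k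
    have hlm : ∀ k, cnt lam N k ≤ cnt mu N k + 1 := fun k =>
      cnt_le_succ_strip hlam hmu h2 N k
    set X := x / (1 - α * x) with hX
    set Y := (1 + β * x) / (1 - α * x) with hY
    set E : Fin (n + 1) → Fin (1 + 1) := fun k =>
      ⟨cnt lam N (k : ℕ) - cnt mu N (k : ℕ), by
        have := hml (k : ℕ); have := hlm (k : ℕ); omega⟩ with hE
    unfold rowTransferElem
    rw [Finset.sum_eq_single E]
    · have hElast : (E (Fin.last n) : ℕ) = 0 := by
        simp only [hE, Fin.val_last]
        rw [cnt_eq_zero hlam N hlamn, cnt_eq_zero hmu N hmun]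
      rw [if_pos hElast]
      set g : ℕ → F := fun j =>
        (if cnt lam N j ≠ cnt mu N j then X else 1) *
        (if cnt lam N j = cnt mu N j ∧ mRow mu N j ≠ 0 then Y else 1) with hg
      have hfac : ∀ j : Fin n,
          grothRowWeight α β x (E j.castSucc) (mRow mu N j) (E j.succ) (mRow lam N j)
            = g (j : ℕ) := by
        intro j
        have ha : ((E j.castSucc : Fin (1 + 1)) : ℕ)
            = cnt lam N (j : ℕ) - cnt mu N (j : ℕ) := by
          simp only [hE, Fin.coe_castSucc]
        have hc : ((E j.succ : Fin (1 + 1)) : ℕ)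
            = cnt lam N ((j : ℕ) + 1) - cnt mu N ((j : ℕ) + 1) := by
          simp only [hE, Fin.val_succ]
        rw [ha, hc]
        have hsl := cnt_split lam N (j : ℕ)
        have hsm := cnt_split mu N (j : ℕ)
        have hj1 := hml (j : ℕ)
        have hj2 := hml ((j : ℕ) + 1)
        have hj3 := hlm (j : ℕ)
        have hj4 := hlm ((j : ℕ) + 1)
        unfold grothRowWeight
        rw [if_pos ⟨by omega, by omega, by omega⟩]
        by_cases heq : cnt lam N (j : ℕ) = cnt mu N (j : ℕ)
        · rw [if_neg (by omega)]
          by_cases hm : mRow mu N (j : ℕ) = 0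
          · rw [if_pos hm, hg]
            simp only [heq, ne_eq, not_true_eq_false, if_false, hm, not_true_eq_false,
              and_false, if_false, one_mul]
          · rw [if_neg hm, hg]
            simp only [heq, ne_eq, not_true_eq_false, if_false, hm, not_false_eq_true,
              and_self, if_true, one_mul]
            exact hY.symm
        · rw [if_pos (by omega), hg]
          simp only [heq, ne_eq, not_false_eq_true, if_true, false_and, if_false, mul_one]
          exact hX.symm
      calc (∏ j : Fin n,
              grothRowWeight α β x (E j.castSucc) (mRow mu N j) (E j.succ) (mRow lam N j))
          = ∏ j : Fin n, g (j : ℕ) := Finset.prod_congr rfl (fun j _ => hfac j)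
        _ = ∏ j ∈ Finset.range n, g j := Fin.prod_univ_eq_prod_range g n
        _ = X ^ (∑ i ∈ Finset.range N, (lam i - mu i)) *
            Y ^ (((Finset.range N).filter (fun i => lam (i + 1) < mu i)).card) := by
            rw [hg]
            rw [Finset.prod_mul_distrib, ← Finset.prod_filter, ← Finset.prod_filter,
              Finset.prod_const, Finset.prod_const,
              countC hlam hmu h1 h2 N n hlamn hmun,
              ← countD hlam hmu h1 h2 N n hlamN hmuN hmun]
    · intro e _ hne
      split_ifs with h
      · by_contra hprod
        have hall := conservation α β x lam mu N n hlam hmu hlamn hmun e h hprod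
        refine hne (funext fun k => Fin.ext ?_)
        have hk := hall k
        have h1k := hml (k : ℕ)
        simp only [hE]
        omega
      · rfl
    · intro h
      exact absurd (Finset.mem_univ E) h
  · intro hns
    rw [not_and_or] at hns
    push_neg at hns
    have hmanti : Antitone mu := antitone_nat_of_succ_le hmu
    have hlanti : Antitone lam := antitone_nat_of_succ_le hlam
    unfold rowTransferElem
    apply Finset.sum_eq_zero
    intro e _
    split_ifs with h
    · by_contra hprod
      have hall := conservation α β x lam mu N n hlam hmu hlamn hmun e h hprod
      rcases hns with ⟨i, hi⟩ | ⟨i, hi⟩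
      · -- lam i < mu i
        have hiN : i < N := by
          by_contra hc; push_neg at hc; rw [hmuN i hc] at hi; omega
        have hin : mu i ≤ n := le_trans (hmanti (Nat.zero_le i)) hmun
        have hkf : mu i - 1 < n + 1 := by omega
        have hall' := hall ⟨mu i - 1, hkf⟩
        have hvk : ((⟨mu i - 1, hkf⟩ : Fin (n + 1)) : ℕ) = mu i - 1 := rfl
        rw [hvk] at hall'
        have hcm : i < cnt mu N (mu i - 1) :=
          (cnt_lt_iff hmu N _ i).mpr ⟨hiN, by omega⟩
        have hcl : ¬ (i < cnt lam N (mu i - 1)) := by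
          rw [cnt_lt_iff hlam N]
          rintro ⟨-, hlt⟩
          omega
        have hel := (e ⟨mu i - 1, hkf⟩).isLt
        omega
      · -- mu i < lam (i + 1)
        have hiN : i + 1 < N := by
          by_contra hc; push_neg at hc; rw [hlamN (i + 1) hc] at hi; omega
        have hin : lam (i + 1) ≤ n := le_trans (hlanti (Nat.zero_le (i + 1))) hlamn
        have hkf : lam (i + 1) - 1 < n + 1 := by omega
        have hall' := hall ⟨lam (i + 1) - 1, hkf⟩
        have hvk : ((⟨lam (i + 1) - 1, hkf⟩ : Fin (n + 1)) : ℕ) = lam (i + 1) - 1 := rfl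
        rw [hvk] at hall'
        have hcl : i + 1 < cnt lam N (lam (i + 1) - 1) :=
          (cnt_lt_iff hlam N _ (i + 1)).mpr ⟨hiN, by omega⟩
        have hcm : ¬ (i < cnt mu N (lam (i + 1) - 1)) := by
          rw [cnt_lt_iff hmu N]
          rintro ⟨-, hlt⟩
          omega
        have hel := (e ⟨lam (i + 1) - 1, hkf⟩).isLt
        omega
    · rfl
end

section
/- For partitions μ ⊆ λ, the matrix element ⟨μ|t(x)|λ⟩ of the row transfer matrix for dual canonical Grothendieck polynomials equals β^{r(λ/μ)-b(λ/μ)}·(α+β)^{|λ/μ|-r(λ/μ)-c(λ/μ)+b(λ/μ)}·x^{b(λ/μ)}·(α+x)^{c(λ/μ)-b(λ/μ)}, where r, c, b denote respectively the number of nonzero rows, nonzero columns, and connected components of the skew diagram λ/μ; and ⟨μ|t(x)|λ⟩ = 0 if μ ⊄ λ. -/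
/-- Vertex weights of the bosonic row model (`l`-matrix) for dual canonical Grothendieck
polynomials `g^{(α,β)}`: `w_x(a,b;c,d) = δ_{a+b,c+d}·[(α+β)^{a-d-1}(x+α)β^d if a > d;
β^{a-1}x if 0 < a ≤ d; 1 if a = 0]`. -/
def dualGrothRowWeight {F : Type*} [Field F] (α β x : F) (a b c d : ℕ) : F :=
  if a + b = c + d then
    (if a = 0 then 1
     else if a ≤ d then β ^ (a - 1) * x
     else (α + β) ^ (a - d - 1) * (x + α) * β ^ d)
  else 0

/-- Number of nonzero rows of the skew shape `λ/μ` (rows indexed below `N`). -/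
def rStat (N : ℕ) (lam mu : ℕ → ℕ) : ℕ :=
  ((Finset.range N).filter (fun i => mu i < lam i)).card

/-- Number of nonzero columns of the skew shape `λ/μ` (columns `1, …, n`). -/
def cStat (n N : ℕ) (lam mu : ℕ → ℕ) : ℕ :=
  ((Finset.Icc 1 n).filter (fun j => ∃ i ∈ Finset.range N, mu i < j ∧ j ≤ lam i)).card

/-- Number of connected components of the skew shape `λ/μ`: the number of nonzero rows
minus the number of adjacent pairs of nonzero rows sharing a column. -/
def bStat (N : ℕ) (lam mu : ℕ → ℕ) : ℕ :=
  rStat N lam mu -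
    ((Finset.range N).filter
      (fun i => mu i < lam i ∧ mu (i + 1) < lam (i + 1) ∧ mu i < lam (i + 1))).card

section DGTAux

open Finset

/-- Antitone from step condition. -/
lemma dgt_anti {f : ℕ → ℕ} (hf : ∀ i, f (i+1) ≤ f i) : ∀ {i k : ℕ}, i ≤ k → f k ≤ f i := by
  intro i k h
  induction h with
  | refl => exact le_rfl
  | step h ih => exact le_trans (hf _) (by assumption)

/-- number of cells of column `j+1` of the skew shape. -/
def dgtA (N : ℕ) (lam mu : ℕ → ℕ) (j : ℕ) : ℕ :=
  ((Finset.range N).filter (fun i => mu i ≤ j ∧ j < lam i)).card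

/-- number of rows of `p` of size at least `j+1`. -/
def dgtC (N : ℕ) (p : ℕ → ℕ) (j : ℕ) : ℕ :=
  ((Finset.range N).filter (fun i => j < p i)).card

lemma dgtC_rec (N : ℕ) (p : ℕ → ℕ) (j : ℕ) :
    dgtC N p j = mRow p N j + dgtC N p (j+1) := by
  classical
  have hsplit : (Finset.range N).filter (fun i => j < p i)
      = (Finset.range N).filter (fun i => p i = j + 1)
        ∪ (Finset.range N).filter (fun i => j + 1 < p i) := by
    ext i
    simp only [mem_filter, mem_union, mem_range]
    omega
  have hdisj : Disjoint ((Finset.range N).filter (fun i => p i = j + 1))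
      ((Finset.range N).filter (fun i => j + 1 < p i)) := by
    rw [Finset.disjoint_left]
    intro a ha hb
    simp only [mem_filter] at ha hb
    omega
  rw [dgtC, hsplit, Finset.card_union_of_disjoint hdisj, mRow, dgtC]

lemma dgtC_split (N : ℕ) (lam mu : ℕ → ℕ) (hml : ∀ i, mu i ≤ lam i) (j : ℕ) :
    dgtC N lam j = dgtA N lam mu j + dgtC N mu j := by
  classical
  have hsplit : (Finset.range N).filter (fun i => j < lam i)
      = (Finset.range N).filter (fun i => mu i ≤ j ∧ j < lam i)
        ∪ (Finset.range N).filter (fun i => j < mu i) := by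
    ext i
    simp only [mem_filter, mem_union, mem_range]
    have := hml i
    omega
  have hdisj : Disjoint ((Finset.range N).filter (fun i => mu i ≤ j ∧ j < lam i))
      ((Finset.range N).filter (fun i => j < mu i)) := by
    rw [Finset.disjoint_left]
    intro a ha hb
    simp only [mem_filter] at ha hb
    omega
  rw [dgtC, hsplit, Finset.card_union_of_disjoint hdisj, dgtA, dgtC]

lemma dgtC_zero (N n : ℕ) (p : ℕ → ℕ) (hp : ∀ i, i < N → p i ≤ n) : dgtC N p n = 0 := by
  rw [dgtC, Finset.card_eq_zero, Finset.filter_eq_empty_iff]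
  intro i hi
  have := hp i (mem_range.mp hi)
  omega

lemma sum_mRow_eq (p : ℕ → ℕ) (N n j : ℕ) (hp : ∀ i, i < N → p i ≤ n) :
    ∑ k ∈ Finset.Ico j n, mRow p N k = dgtC N p j := by
  classical
  rw [dgtC, Finset.card_eq_sum_card_fiberwise (f := fun i => p i - 1) (t := Finset.Ico j n)
    (fun i hi => by
      simp only [Finset.mem_coe, mem_filter, mem_range] at hi
      have := hp i hi.1
      simp only [Finset.mem_coe, Finset.mem_Ico]
      omega)]
  apply Finset.sum_congr rfl
  intro k hk
  simp only [Finset.mem_Ico] at hk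
  rw [mRow]
  congr 1
  rw [Finset.filter_filter]
  ext i
  simp only [mem_filter, mem_range]
  omega

/-- number of cells of rows above that stick out past column `j+1`. -/
def dgtX (M : ℕ) (lam mu : ℕ → ℕ) (j : ℕ) : ℕ :=
  ((Finset.range M).filter (fun i => mu i ≤ j ∧ j + 2 ≤ lam i)).card

lemma dgtA_pos_iff (M : ℕ) (lam mu : ℕ → ℕ) (j : ℕ) :
    0 < dgtA M lam mu j ↔ ∃ i, i < M ∧ mu i ≤ j ∧ j < lam i := by
  rw [dgtA, Finset.card_pos, Finset.filter_nonempty_iff]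
  simp only [Finset.mem_range]

lemma dgtX_eq_zero_iff (M : ℕ) (lam mu : ℕ → ℕ) (j : ℕ) :
    dgtX M lam mu j = 0 ↔ ∀ i, i < M → ¬(mu i ≤ j ∧ j + 2 ≤ lam i) := by
  rw [dgtX, Finset.card_eq_zero, Finset.filter_eq_empty_iff]
  simp only [Finset.mem_range]

lemma dgt_keyB (n : ℕ) (lam mu : ℕ → ℕ) (hl : ∀ i, lam (i+1) ≤ lam i)
    (hm : ∀ i, mu (i+1) ≤ mu i) (hml : ∀ i, mu i ≤ lam i) (hn : ∀ i, lam i ≤ n) :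
    ∀ M : ℕ,
    ((Finset.range n).filter (fun j =>
        0 < dgtA M lam mu j ∧ dgtX M lam mu j = 0)).card
    + ((Finset.range M).filter (fun i =>
        i + 1 < M ∧ mu i < lam i ∧ mu (i+1) < lam (i+1) ∧ mu i < lam (i+1))).card
    = ((Finset.range M).filter (fun i => mu i < lam i)).card := by
  intro M
  induction M with
  | zero =>
    have h0 : ∀ j, ¬ (0 < dgtA 0 lam mu j ∧ dgtX 0 lam mu j = 0) := by
      intro j hc
      rw [dgtA_pos_iff] at hc
      obtain ⟨⟨i, hi, -⟩, -⟩ := hc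
      omega
    rw [Finset.filter_false_of_mem (fun j _ => h0 j)]
    all_goals simp
  | succ M ih =>
    by_cases hrow : mu M < lam M
    · by_cases hP : ∃ K, M = K + 1 ∧ mu K < lam M
      · obtain ⟨K, rfl, hPm⟩ := hP
        have hcol : ((Finset.range n).filter (fun j =>
              0 < dgtA (K+1+1) lam mu j ∧ dgtX (K+1+1) lam mu j = 0))
            = ((Finset.range n).filter (fun j =>
              0 < dgtA (K+1) lam mu j ∧ dgtX (K+1) lam mu j = 0)) := by
          ext j
          simp only [Finset.mem_filter, dgtA_pos_iff, dgtX_eq_zero_iff]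
          constructor
          · rintro ⟨hj, ⟨i, hi, h1, h2⟩, hnl⟩
            refine ⟨hj, ?_, fun i' hi' hc => hnl i' (by omega) hc⟩
            by_cases hiK : i < K + 1
            · exact ⟨i, hiK, h1, h2⟩
            · have hiM : i = K + 1 := by omega
              subst hiM
              have hlam1 : lam (K+1) = j + 1 := by
                by_contra hne
                exact hnl (K+1) (by omega) ⟨h1, by omega⟩
              refine ⟨K, by omega, by omega, ?_⟩
              have := hl K; omega
          · rintro ⟨hj, ⟨i, hi, h1, h2⟩, hnl⟩
            refine ⟨hj, ⟨i, by omega, h1, h2⟩, ?_⟩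
            intro i' hi' hc
            by_cases hi'K : i' < K + 1
            · exact hnl i' hi'K hc
            · have hi'M : i' = K + 1 := by omega
              subst hi'M
              have hK : mu K ≤ j := le_trans (dgt_anti hm (show i ≤ K by omega)) h1
              exact hnl K (by omega) ⟨hK, by have := hl K; omega⟩
        have hKnot : K ∉ ((Finset.range (K+1)).filter (fun i =>
            i + 1 < K+1 ∧ mu i < lam i ∧ mu (i+1) < lam (i+1) ∧ mu i < lam (i+1))) := by
          intro hmem
          simp only [Finset.mem_filter] at hmem
          omega
        have hLK : ((Finset.range (K+1+1)).filter (fun i =>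
              i + 1 < K+1+1 ∧ mu i < lam i ∧ mu (i+1) < lam (i+1) ∧ mu i < lam (i+1)))
            = insert K ((Finset.range (K+1)).filter (fun i =>
              i + 1 < K+1 ∧ mu i < lam i ∧ mu (i+1) < lam (i+1) ∧ mu i < lam (i+1))) := by
          ext i
          simp only [Finset.mem_insert, Finset.mem_filter, Finset.mem_range]
          constructor
          · rintro ⟨hi, hc, h3, h4, h5⟩
            by_cases hiK : i + 1 < K + 1
            · right; exact ⟨by omega, hiK, h3, h4, h5⟩
            · left; omega
          · rintro (hiK | ⟨hi, hc, h3, h4, h5⟩)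
            · rw [hiK]
              refine ⟨by omega, by omega, ?_, hrow, hPm⟩
              have := hl K; omega
            · exact ⟨by omega, by omega, h3, h4, h5⟩
        have hMnot : (K+1) ∉ ((Finset.range (K+1)).filter (fun i => mu i < lam i)) := by
          intro hmem
          exact absurd (Finset.mem_range.mp (Finset.mem_of_mem_filter _ hmem)) (by omega)
        have hr : ((Finset.range (K+1+1)).filter (fun i => mu i < lam i)).card
            = ((Finset.range (K+1)).filter (fun i => mu i < lam i)).card + 1 := by
          rw [Finset.range_add_one, Finset.filter_insert, if_pos hrow,
            Finset.card_insert_of_notMem hMnot]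
        rw [hcol, hLK, Finset.card_insert_of_notMem hKnot, hr]
        omega
      · -- ¬P case: every row above has mu i ≥ lam M
        have hF : ∀ i, i < M → lam M ≤ mu i := by
          intro i hi
          by_contra hcon
          push_neg at hcon
          refine hP ⟨M - 1, by omega, ?_⟩
          exact lt_of_le_of_lt (dgt_anti hm (show i ≤ M - 1 by omega)) hcon
        have hnotmem : lam M - 1 ∉ ((Finset.range n).filter (fun j =>
              0 < dgtA M lam mu j ∧ dgtX M lam mu j = 0)) := by
          intro hmem
          simp only [Finset.mem_filter, dgtA_pos_iff] at hmem
          obtain ⟨-, ⟨i, hi, h1, h2⟩, -⟩ := hmem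
          have := hF i hi
          omega
        have hcol : ((Finset.range n).filter (fun j =>
              0 < dgtA (M+1) lam mu j ∧ dgtX (M+1) lam mu j = 0))
            = insert (lam M - 1) ((Finset.range n).filter (fun j =>
              0 < dgtA M lam mu j ∧ dgtX M lam mu j = 0)) := by
          ext j
          simp only [Finset.mem_insert, Finset.mem_filter, dgtA_pos_iff, dgtX_eq_zero_iff]
          constructor
          · rintro ⟨hj, ⟨i, hi, h1, h2⟩, hnl⟩
            by_cases hiM : i < M
            · right
              exact ⟨hj, ⟨i, hiM, h1, h2⟩, fun i' hi' hc => hnl i' (by omega) hc⟩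
            · have hiM' : i = M := by omega
              rw [hiM'] at h1 h2
              left
              by_contra hne
              exact hnl M (by omega) ⟨h1, by omega⟩
          · rintro (rfl | ⟨hj, ⟨i, hi, h1, h2⟩, hnl⟩)
            · refine ⟨Finset.mem_range.mpr (by have := hn M; omega),
                ⟨M, by omega, by omega, by omega⟩, ?_⟩
              intro i' hi' hc
              by_cases hi'M : i' < M
              · have := hF i' hi'M; omega
              · have hEq : i' = M := by omega
                rw [hEq] at hc
                omega
            · refine ⟨hj, ⟨i, by omega, h1, h2⟩, ?_⟩
              intro i' hi' hc
              by_cases hi'M : i' < M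
              · exact hnl i' hi'M hc
              · have hEq : i' = M := by omega
                rw [hEq] at hc
                have := hF i hi
                omega
        have hL : ((Finset.range (M+1)).filter (fun i =>
              i + 1 < M+1 ∧ mu i < lam i ∧ mu (i+1) < lam (i+1) ∧ mu i < lam (i+1)))
            = ((Finset.range M).filter (fun i =>
              i + 1 < M ∧ mu i < lam i ∧ mu (i+1) < lam (i+1) ∧ mu i < lam (i+1))) := by
          ext i
          simp only [Finset.mem_filter, Finset.mem_range]
          constructor
          · rintro ⟨hi, hc, h3, h4, h5⟩
            by_cases hi1 : i + 1 < M
            · exact ⟨by omega, hi1, h3, h4, h5⟩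
            · exfalso
              have hi1' : i + 1 = M := by omega
              have := hF i (by omega)
              rw [hi1'] at h5
              omega
          · rintro ⟨hi, hc, h3, h4, h5⟩
            exact ⟨by omega, by omega, h3, h4, h5⟩
        have hMnot : M ∉ ((Finset.range M).filter (fun i => mu i < lam i)) := by
          intro hmem
          exact absurd (Finset.mem_range.mp (Finset.mem_of_mem_filter _ hmem)) (by omega)
        have hr : ((Finset.range (M+1)).filter (fun i => mu i < lam i)).card
            = ((Finset.range M).filter (fun i => mu i < lam i)).card + 1 := by
          rw [Finset.range_add_one, Finset.filter_insert, if_pos hrow,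
            Finset.card_insert_of_notMem hMnot]
        rw [hcol, Finset.card_insert_of_notMem hnotmem, hL, hr]
        omega
    · -- empty bottom row
      have hcol : ((Finset.range n).filter (fun j =>
            0 < dgtA (M+1) lam mu j ∧ dgtX (M+1) lam mu j = 0))
          = ((Finset.range n).filter (fun j =>
            0 < dgtA M lam mu j ∧ dgtX M lam mu j = 0)) := by
        ext j
        simp only [Finset.mem_filter, dgtA_pos_iff, dgtX_eq_zero_iff]
        constructor
        · rintro ⟨hj, ⟨i, hi, h1, h2⟩, hnl⟩
          have hiM : i < M := by
            by_contra hcc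
            have hEq : i = M := by omega
            rw [hEq] at h1 h2
            omega
          exact ⟨hj, ⟨i, hiM, h1, h2⟩, fun i' hi' hc => hnl i' (by omega) hc⟩
        · rintro ⟨hj, ⟨i, hi, h1, h2⟩, hnl⟩
          refine ⟨hj, ⟨i, by omega, h1, h2⟩, ?_⟩
          intro i' hi' hc
          by_cases hi'M : i' < M
          · exact hnl i' hi'M hc
          · have hEq : i' = M := by omega
            rw [hEq] at hc
            omega
      have hL : ((Finset.range (M+1)).filter (fun i =>
            i + 1 < M+1 ∧ mu i < lam i ∧ mu (i+1) < lam (i+1) ∧ mu i < lam (i+1)))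
          = ((Finset.range M).filter (fun i =>
            i + 1 < M ∧ mu i < lam i ∧ mu (i+1) < lam (i+1) ∧ mu i < lam (i+1))) := by
        ext i
        simp only [Finset.mem_filter, Finset.mem_range]
        constructor
        · rintro ⟨hi, hc, h3, h4, h5⟩
          by_cases hi1 : i + 1 < M
          · exact ⟨by omega, hi1, h3, h4, h5⟩
          · exfalso
            have hi1' : i + 1 = M := by omega
            rw [hi1'] at h4
            exact hrow h4
        · rintro ⟨hi, hc, h3, h4, h5⟩
          exact ⟨by omega, by omega, h3, h4, h5⟩
      have hr : ((Finset.range (M+1)).filter (fun i => mu i < lam i)).card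
          = ((Finset.range M).filter (fun i => mu i < lam i)).card := by
        rw [Finset.range_add_one, Finset.filter_insert, if_neg hrow]
      rw [hcol, hL, hr]
      exact ih

/-- number of rows ending exactly at column `j+1` with a skew cell there. -/
def dgtE (N : ℕ) (lam mu : ℕ → ℕ) (j : ℕ) : ℕ :=
  ((Finset.range N).filter (fun i => mu i ≤ j ∧ lam i = j + 1)).card

/-- number of empty rows ending exactly at column `j+1`. -/
def dgtY (N : ℕ) (lam mu : ℕ → ℕ) (j : ℕ) : ℕ :=
  ((Finset.range N).filter (fun i => lam i = j + 1 ∧ j + 1 ≤ mu i)).card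

lemma dgt_aE (N : ℕ) (lam mu : ℕ → ℕ) (j : ℕ) :
    dgtA N lam mu j = dgtE N lam mu j + dgtX N lam mu j := by
  rw [dgtA, dgtE, dgtX]
  have hsplit : (Finset.range N).filter (fun i => mu i ≤ j ∧ j < lam i)
      = (Finset.range N).filter (fun i => mu i ≤ j ∧ lam i = j + 1)
        ∪ (Finset.range N).filter (fun i => mu i ≤ j ∧ j + 2 ≤ lam i) := by
    ext i
    simp only [Finset.mem_filter, Finset.mem_union, Finset.mem_range]
    omega
  have hdisj : Disjoint ((Finset.range N).filter (fun i => mu i ≤ j ∧ lam i = j + 1))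
      ((Finset.range N).filter (fun i => mu i ≤ j ∧ j + 2 ≤ lam i)) := by
    rw [Finset.disjoint_left]
    intro a ha hb
    simp only [Finset.mem_filter] at ha hb
    omega
  rw [hsplit, Finset.card_union_of_disjoint hdisj]

lemma dgt_dE (N : ℕ) (lam mu : ℕ → ℕ) (j : ℕ) :
    mRow lam N j = dgtE N lam mu j + dgtY N lam mu j := by
  rw [mRow, dgtE, dgtY]
  have hsplit : (Finset.range N).filter (fun i => lam i = j + 1)
      = (Finset.range N).filter (fun i => mu i ≤ j ∧ lam i = j + 1)
        ∪ (Finset.range N).filter (fun i => lam i = j + 1 ∧ j + 1 ≤ mu i) := by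
    ext i
    simp only [Finset.mem_filter, Finset.mem_union, Finset.mem_range]
    omega
  have hdisj : Disjoint ((Finset.range N).filter (fun i => mu i ≤ j ∧ lam i = j + 1))
      ((Finset.range N).filter (fun i => lam i = j + 1 ∧ j + 1 ≤ mu i)) := by
    rw [Finset.disjoint_left]
    intro a ha hb
    simp only [Finset.mem_filter] at ha hb
    omega
  rw [hsplit, Finset.card_union_of_disjoint hdisj]

lemma dgt_XY (N : ℕ) (lam mu : ℕ → ℕ) (hl : ∀ i, lam (i+1) ≤ lam i)
    (hm : ∀ i, mu (i+1) ≤ mu i) (j : ℕ) :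
    dgtX N lam mu j ≠ 0 → dgtY N lam mu j = 0 := by
  intro hX
  by_contra hY
  obtain ⟨i1, h1⟩ := Finset.card_pos.mp (Nat.pos_of_ne_zero hX)
  obtain ⟨i2, h2⟩ := Finset.card_pos.mp (Nat.pos_of_ne_zero hY)
  simp only [Finset.mem_filter, Finset.mem_range] at h1 h2
  rcases le_total i1 i2 with h | h
  · have := dgt_anti hm h
    omega
  · have := dgt_anti hl h
    omega

lemma dgt_r_eq (N n : ℕ) (lam mu : ℕ → ℕ) (hn : ∀ i, lam i ≤ n) :
    ((Finset.range N).filter (fun i => mu i < lam i)).card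
      = ∑ j ∈ Finset.range n, dgtE N lam mu j := by
  rw [Finset.card_eq_sum_card_fiberwise (f := fun i => lam i - 1) (t := Finset.range n)
    (fun i hi => by
      simp only [Finset.mem_coe, Finset.mem_filter] at hi
      have := hn i
      simp only [Finset.mem_coe, Finset.mem_range]
      omega)]
  apply Finset.sum_congr rfl
  intro j hj
  rw [dgtE, Finset.filter_filter]
  congr 1
  ext i
  simp only [Finset.mem_filter, Finset.mem_range]
  omega

lemma dgt_sumA (N n : ℕ) (lam mu : ℕ → ℕ) (hn : ∀ i, lam i ≤ n) :
    ∑ j ∈ Finset.range n, dgtA N lam mu j = ∑ i ∈ Finset.range N, (lam i - mu i) := by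
  simp only [dgtA, Finset.card_filter]
  rw [Finset.sum_comm]
  apply Finset.sum_congr rfl
  intro i hi
  rw [← Finset.card_filter]
  have : (Finset.range n).filter (fun j => mu i ≤ j ∧ j < lam i)
      = Finset.Ico (mu i) (lam i) := by
    ext j
    simp only [Finset.mem_filter, Finset.mem_range, Finset.mem_Ico]
    have := hn i
    omega
  rw [this, Nat.card_Ico]

lemma dgt_arith (a d E X Y : ℕ) (ha : a = E + X) (hd : d = E + Y) (hxy : X ≠ 0 → Y = 0) :
    ((if a ≤ d then a - 1 else d) + (if 0 < a ∧ a ≤ d then 1 else 0) = E)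
    ∧ ((if a ≤ d then 0 else a - d - 1) + E + (if a ≤ d then 0 else 1) = a)
    ∧ ((a ≤ d) ↔ X = 0) := by
  rcases Nat.eq_zero_or_pos X with h | h
  · subst ha hd h
    refine ⟨?_, ?_, ?_⟩ <;> (try split_ifs) <;> omega
  · have hY := hxy (by omega)
    subst ha hd hY
    refine ⟨?_, ?_, ?_⟩ <;> (try split_ifs) <;> omega

lemma dgt_ind (a d : ℕ) :
    (if 0 < a ∧ a ≤ d then 1 else 0) + (if a ≤ d then 0 else 1)
      = (if 0 < a then 1 else 0) := by
  split_ifs <;> omega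

lemma dgt_weight_eval {F : Type*} [Field F] (α β x : F) (a b c d : ℕ) (hcons : a + b = c + d) :
    dualGrothRowWeight α β x a b c d
      = β ^ (if a ≤ d then a - 1 else d) * (α + β) ^ (if a ≤ d then 0 else a - d - 1)
        * x ^ (if 0 < a ∧ a ≤ d then 1 else 0) * (x + α) ^ (if a ≤ d then 0 else 1) := by
  rw [dualGrothRowWeight, if_pos hcons]
  by_cases h1 : a = 0
  · subst h1
    simp
  · rw [if_neg h1]
    by_cases h2 : a ≤ d
    · rw [if_pos h2, if_pos h2, if_pos h2, if_pos h2,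
        if_pos (show 0 < a ∧ a ≤ d from ⟨by omega, h2⟩)]
      rw [pow_zero, pow_zero, pow_one]
      ring
    · rw [if_neg h2, if_neg h2, if_neg h2, if_neg h2,
        if_neg (show ¬(0 < a ∧ a ≤ d) from fun h => h2 h.2)]
      rw [pow_zero, pow_one]
      ring

lemma dgt_c_eq (n N : ℕ) (lam mu : ℕ → ℕ) :
    ((Finset.range n).filter (fun jv => 0 < dgtA N lam mu jv)).card = cStat n N lam mu := by
  rw [cStat]
  apply Finset.card_bij (fun jv _ => jv + 1)
  · intro jv hjv
    simp only [Finset.mem_filter, Finset.mem_range, dgtA_pos_iff] at hjv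
    obtain ⟨hjn, i, hi, h1, h2⟩ := hjv
    simp only [Finset.mem_filter, Finset.mem_Icc]
    exact ⟨⟨by omega, by omega⟩, ⟨i, Finset.mem_range.mpr hi, by omega, by omega⟩⟩
  · intro a ha b hb hab
    omega
  · intro j hj
    simp only [Finset.mem_filter, Finset.mem_Icc] at hj
    obtain ⟨⟨hj1, hj2⟩, i, hi, h1, h2⟩ := hj
    rw [Finset.mem_range] at hi
    refine ⟨j - 1, ?_, by omega⟩
    simp only [Finset.mem_filter, Finset.mem_range, dgtA_pos_iff]
    exact ⟨by omega, ⟨i, hi, by omega, by omega⟩⟩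

lemma dgt_key0 (N n B : ℕ) (lam mu : ℕ → ℕ)
    (hmule : ∀ i, mu i ≤ n) (hlamle : ∀ i, lam i ≤ n)
    (e : Fin (n+1) → Fin (B+1))
    (hlast : (e (Fin.last n) : ℕ) = 0)
    (hcons : ∀ j : Fin n,
      ((e j.castSucc : ℕ) + mRow mu N (j : ℕ) = (e j.succ : ℕ) + mRow lam N (j : ℕ))) :
    ∀ v, v ≤ n → ∀ hv : v < n + 1,
      ((e ⟨v, hv⟩ : ℕ)) + dgtC N mu v = dgtC N lam v := by
  set f : ℕ → ℕ := fun v => if hv : v < n + 1 then (e ⟨v, hv⟩ : ℕ) else 0 with hfdef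
  have hfX : ∀ (X : Fin (n+1)), f (X : ℕ) = (e X : ℕ) := by
    intro X
    simp only [hfdef]
    rw [dif_pos X.isLt, Fin.eta]
  have hlast_f : f n = 0 := by
    have h := hfX (Fin.last n)
    rw [Fin.val_last] at h
    rw [h, hlast]
  have hcons_f : ∀ v, v < n → f v + mRow mu N v = f (v+1) + mRow lam N v := by
    intro v hv
    have h := hcons ⟨v, hv⟩
    have h1 : f v = (e (⟨v, hv⟩ : Fin n).castSucc : ℕ) := by
      have := hfX ((⟨v, hv⟩ : Fin n).castSucc)
      simpa using this
    have h2 : f (v + 1) = (e (⟨v, hv⟩ : Fin n).succ : ℕ) := by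
      have := hfX ((⟨v, hv⟩ : Fin n).succ)
      simpa using this
    rw [h1, h2]
    exact h
  have key : ∀ k v, v ≤ n → n - v = k → f v + dgtC N mu v = dgtC N lam v := by
    intro k
    induction k with
    | zero =>
      intro v hv hk
      have hveq : v = n := by omega
      rw [hveq, hlast_f, dgtC_zero N n mu (fun i _ => hmule i),
        dgtC_zero N n lam (fun i _ => hlamle i)]
    | succ k ihk =>
      intro v hv hk
      have h1 := hcons_f v (by omega)
      have h2 := ihk (v+1) (by omega) (by omega)
      have h3 := dgtC_rec N mu v
      have h4 := dgtC_rec N lam v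
      omega
  intro v hv hv'
  have hk := key (n - v) v hv rfl
  have hfv : f v = (e ⟨v, hv'⟩ : ℕ) := by
    have := hfX ⟨v, hv'⟩
    simpa using this
  rw [hfv] at hk
  exact hk

lemma dgt_prod_eval {F : Type*} [Field F] (α β x : F) (N n : ℕ) (lam mu : ℕ → ℕ)
    (hlam : ∀ i, lam (i + 1) ≤ lam i) (hmu : ∀ i, mu (i + 1) ≤ mu i)
    (hml : ∀ i, mu i ≤ lam i) (hlamle : ∀ i, lam i ≤ n)
    (hlamN : ∀ i, N ≤ i → lam i = 0)
    (hconsA : ∀ jv, dgtA N lam mu jv + mRow mu N jv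
      = dgtA N lam mu (jv+1) + mRow lam N jv) :
    (∏ jv ∈ Finset.range n, dualGrothRowWeight α β x (dgtA N lam mu jv)
        (mRow mu N jv) (dgtA N lam mu (jv+1)) (mRow lam N jv))
      = β ^ (rStat N lam mu - bStat N lam mu) *
        (α + β) ^ ((∑ i ∈ Finset.range N, (lam i - mu i)) + bStat N lam mu
            - rStat N lam mu - cStat n N lam mu) *
        x ^ (bStat N lam mu) *
        (α + x) ^ (cStat n N lam mu - bStat N lam mu) := by
  have hstep : ∀ jv ∈ Finset.range n,
      dualGrothRowWeight α β x (dgtA N lam mu jv) (mRow mu N jv)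
        (dgtA N lam mu (jv+1)) (mRow lam N jv)
      = β ^ (if dgtA N lam mu jv ≤ mRow lam N jv then dgtA N lam mu jv - 1
              else mRow lam N jv)
        * (α + β) ^ (if dgtA N lam mu jv ≤ mRow lam N jv then 0
              else dgtA N lam mu jv - mRow lam N jv - 1)
        * x ^ (if 0 < dgtA N lam mu jv ∧ dgtA N lam mu jv ≤ mRow lam N jv then 1 else 0)
        * (x + α) ^ (if dgtA N lam mu jv ≤ mRow lam N jv then 0 else 1) :=
    fun jv _ => dgt_weight_eval α β x _ _ _ _ (hconsA jv)
  rw [Finset.prod_congr rfl hstep, Finset.prod_mul_distrib, Finset.prod_mul_distrib,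
    Finset.prod_mul_distrib, Finset.prod_pow_eq_pow_sum, Finset.prod_pow_eq_pow_sum,
    Finset.prod_pow_eq_pow_sum, Finset.prod_pow_eq_pow_sum]
  have harith := fun jv => dgt_arith (dgtA N lam mu jv) (mRow lam N jv)
    (dgtE N lam mu jv) (dgtX N lam mu jv) (dgtY N lam mu jv)
    (dgt_aE N lam mu jv) (dgt_dE N lam mu jv) (dgt_XY N lam mu hlam hmu jv)
  -- sum identities
  have hS13 : (∑ jv ∈ Finset.range n, (if dgtA N lam mu jv ≤ mRow lam N jv
        then dgtA N lam mu jv - 1 else mRow lam N jv))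
      + (∑ jv ∈ Finset.range n,
          (if 0 < dgtA N lam mu jv ∧ dgtA N lam mu jv ≤ mRow lam N jv then 1 else 0))
      = ∑ jv ∈ Finset.range n, dgtE N lam mu jv := by
    rw [← Finset.sum_add_distrib]
    exact Finset.sum_congr rfl (fun jv _ => (harith jv).1)
  have hS2 : (∑ jv ∈ Finset.range n, (if dgtA N lam mu jv ≤ mRow lam N jv then 0
        else dgtA N lam mu jv - mRow lam N jv - 1))
      + (∑ jv ∈ Finset.range n, dgtE N lam mu jv)
      + (∑ jv ∈ Finset.range n, (if dgtA N lam mu jv ≤ mRow lam N jv then 0 else 1))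
      = ∑ jv ∈ Finset.range n, dgtA N lam mu jv := by
    rw [← Finset.sum_add_distrib, ← Finset.sum_add_distrib]
    exact Finset.sum_congr rfl (fun jv _ => (harith jv).2.1)
  have hS34 : (∑ jv ∈ Finset.range n,
        (if 0 < dgtA N lam mu jv ∧ dgtA N lam mu jv ≤ mRow lam N jv then 1 else 0))
      + (∑ jv ∈ Finset.range n, (if dgtA N lam mu jv ≤ mRow lam N jv then 0 else 1))
      = cStat n N lam mu := by
    rw [← Finset.sum_add_distrib, ← dgt_c_eq n N lam mu, Finset.card_filter]
    exact Finset.sum_congr rfl (fun jv _ => dgt_ind _ _)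
  have hrE := dgt_r_eq N n lam mu hlamle
  have hsumA := dgt_sumA N n lam mu hlamle
  -- connected components via keyB
  have hS3 : (∑ jv ∈ Finset.range n,
        (if 0 < dgtA N lam mu jv ∧ dgtA N lam mu jv ≤ mRow lam N jv then 1 else 0))
      = ((Finset.range n).filter (fun jv =>
          0 < dgtA N lam mu jv ∧ dgtX N lam mu jv = 0)).card := by
    rw [Finset.card_filter]
    apply Finset.sum_congr rfl
    intro jv _
    have hiff := (harith jv).2.2
    by_cases h : 0 < dgtA N lam mu jv ∧ dgtA N lam mu jv ≤ mRow lam N jv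
    · rw [if_pos h, if_pos ⟨h.1, hiff.mp h.2⟩]
    · rw [if_neg h, if_neg (fun hc => h ⟨hc.1, hiff.mpr hc.2⟩)]
  have hKB := dgt_keyB n lam mu hlam hmu hml hlamle N
  have hLfix : ((Finset.range N).filter (fun i =>
        i + 1 < N ∧ mu i < lam i ∧ mu (i+1) < lam (i+1) ∧ mu i < lam (i+1))).card
      = ((Finset.range N).filter (fun i =>
        mu i < lam i ∧ mu (i+1) < lam (i+1) ∧ mu i < lam (i+1))).card := by
    congr 1
    apply Finset.filter_congr
    intro i hi
    rw [Finset.mem_range] at hi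
    constructor
    · rintro ⟨-, h⟩; exact h
    · intro h
      refine ⟨?_, h⟩
      by_contra hc
      have h0 := hlamN (i+1) (by omega)
      omega
  have hrdef : rStat N lam mu = ((Finset.range N).filter (fun i => mu i < lam i)).card := rfl
  have hbdef : bStat N lam mu = rStat N lam mu
      - ((Finset.range N).filter (fun i =>
        mu i < lam i ∧ mu (i+1) < lam (i+1) ∧ mu i < lam (i+1))).card := rfl
  have e3 : (∑ jv ∈ Finset.range n,
        (if 0 < dgtA N lam mu jv ∧ dgtA N lam mu jv ≤ mRow lam N jv then 1 else 0))
      = bStat N lam mu := by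
    omega
  have e1 : (∑ jv ∈ Finset.range n, (if dgtA N lam mu jv ≤ mRow lam N jv
        then dgtA N lam mu jv - 1 else mRow lam N jv))
      = rStat N lam mu - bStat N lam mu := by
    omega
  have e4 : (∑ jv ∈ Finset.range n, (if dgtA N lam mu jv ≤ mRow lam N jv then 0 else 1))
      = cStat n N lam mu - bStat N lam mu := by
    omega
  have e2 : (∑ jv ∈ Finset.range n, (if dgtA N lam mu jv ≤ mRow lam N jv then 0
        else dgtA N lam mu jv - mRow lam N jv - 1))
      = (∑ i ∈ Finset.range N, (lam i - mu i)) + bStat N lam mu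
          - rStat N lam mu - cStat n N lam mu := by
    omega
  rw [e1, e2, e3, e4, add_comm x α]

end DGTAux

/-- For partitions `μ ⊆ λ`, the matrix element `⟨μ|t(x)|λ⟩` of the row transfer matrix
for dual canonical Grothendieck polynomials (row-multiplicity encoding, bottom `μ`,
top `λ`, right boundary `0`) equals
`β^{r-b} (α+β)^{|λ/μ|-r-c+b} x^b (α+x)^{c-b}`, where `r`, `c`, `b` are the numbers of
nonzero rows, nonzero columns and connected components of `λ/μ`; it vanishes if `μ ⊄ λ`. -/
theorem dual_groth_transfer_matrix_element {F : Type*} [Field F] (α β x : F)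
    (lam mu : ℕ → ℕ) (hlam : ∀ i, lam (i + 1) ≤ lam i) (hmu : ∀ i, mu (i + 1) ≤ mu i)
    (N : ℕ) (hlamN : ∀ i, N ≤ i → lam i = 0) (hmuN : ∀ i, N ≤ i → mu i = 0)
    (n : ℕ) (hlamn : lam 0 ≤ n) (hmun : mu 0 ≤ n)
    (B : ℕ) (hB : (∑ j ∈ Finset.range n, mRow lam N j) ≤ B) :
    ((∀ i, mu i ≤ lam i) →
      rowTransferElem (dualGrothRowWeight α β x) n B (mRow mu N) (mRow lam N) 0
        = β ^ (rStat N lam mu - bStat N lam mu) *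
          (α + β) ^ ((∑ i ∈ Finset.range N, (lam i - mu i)) + bStat N lam mu
              - rStat N lam mu - cStat n N lam mu) *
          x ^ (bStat N lam mu) *
          (α + x) ^ (cStat n N lam mu - bStat N lam mu)) ∧
    (¬ (∀ i, mu i ≤ lam i) →
      rowTransferElem (dualGrothRowWeight α β x) n B (mRow mu N) (mRow lam N) 0 = 0) := by
  have hlamle : ∀ i, lam i ≤ n := fun i => le_trans (dgt_anti hlam (Nat.zero_le i)) hlamn
  have hmule : ∀ i, mu i ≤ n := fun i => le_trans (dgt_anti hmu (Nat.zero_le i)) hmun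
  constructor
  · intro hml
    have hABlt : ∀ v, dgtA N lam mu v < B + 1 := by
      intro v
      have h1 : dgtA N lam mu v ≤ dgtC N lam 0 := by
        apply Finset.card_le_card
        intro i hi
        simp only [Finset.mem_filter, Finset.mem_range] at hi ⊢
        omega
      have h2 : ∑ k ∈ Finset.range n, mRow lam N k = dgtC N lam 0 := by
        have h3 := sum_mRow_eq lam N n 0 (fun i _ => hlamle i)
        rw [← h3, Finset.range_eq_Ico]
      omega
    have hAn : dgtA N lam mu n = 0 := by
      rw [dgtA, Finset.card_eq_zero, Finset.filter_eq_empty_iff]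
      intro i hi
      have := hlamle i
      omega
    have hconsA : ∀ jv, dgtA N lam mu jv + mRow mu N jv
        = dgtA N lam mu (jv+1) + mRow lam N jv := by
      intro jv
      have h1 := dgtC_split N lam mu hml jv
      have h2 := dgtC_split N lam mu hml (jv+1)
      have h3 := dgtC_rec N mu jv
      have h4 := dgtC_rec N lam jv
      omega
    set E0v : Fin (n+1) → Fin (B+1) :=
      fun k => ⟨dgtA N lam mu (k : ℕ), hABlt (k : ℕ)⟩ with hE0v
    have hzero : ∀ e : Fin (n+1) → Fin (B+1), e ≠ E0v →
        (if (e (Fin.last n) : ℕ) = 0 then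
          ∏ j : Fin n, dualGrothRowWeight α β x (e j.castSucc) (mRow mu N j)
            (e j.succ) (mRow lam N j)
        else 0) = 0 := by
      intro e hne
      by_cases h0 : (e (Fin.last n) : ℕ) = 0
      · rw [if_pos h0]
        by_cases hc : ∀ j : Fin n,
            ((e j.castSucc : ℕ) + mRow mu N (j : ℕ) = (e j.succ : ℕ) + mRow lam N (j : ℕ))
        · exfalso
          apply hne
          have hkey := dgt_key0 N n B lam mu hmule hlamle e h0 hc
          funext k
          apply Fin.ext
          have h1 := hkey (k : ℕ) (by omega) k.isLt
          have h2 : dgtA N lam mu (k : ℕ) + dgtC N mu (k : ℕ) = dgtC N lam (k : ℕ) := by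
            have := dgtC_split N lam mu hml (k : ℕ); omega
          have h3 : (e ⟨(k : ℕ), k.isLt⟩ : ℕ) = (e k : ℕ) := by rw [Fin.eta]
          rw [h3] at h1
          have h4 : (E0v k : ℕ) = dgtA N lam mu (k : ℕ) := by
            rw [hE0v]
          omega
        · push_neg at hc
          obtain ⟨j, hj⟩ := hc
          apply Finset.prod_eq_zero (Finset.mem_univ j)
          rw [dualGrothRowWeight, if_neg hj]
      · rw [if_neg h0]
    rw [rowTransferElem, Fintype.sum_eq_single E0v hzero]
    have hcond : ((E0v (Fin.last n)) : ℕ) = 0 := by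
      rw [hE0v]
      simpa using hAn
    rw [if_pos hcond]
    have hEc : ∀ j : Fin n, ((E0v j.castSucc : ℕ)) = dgtA N lam mu (j : ℕ) := by
      intro j; rw [hE0v]; simp
    have hEs : ∀ j : Fin n, ((E0v j.succ : ℕ)) = dgtA N lam mu ((j : ℕ) + 1) := by
      intro j; rw [hE0v]; simp
    have hp1 : (∏ j : Fin n, dualGrothRowWeight α β x (E0v j.castSucc) (mRow mu N j)
          (E0v j.succ) (mRow lam N j))
        = ∏ jv ∈ Finset.range n, dualGrothRowWeight α β x (dgtA N lam mu jv)
          (mRow mu N jv) (dgtA N lam mu (jv+1)) (mRow lam N jv) := by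
      rw [← Fin.prod_univ_eq_prod_range (fun jv => dualGrothRowWeight α β x
        (dgtA N lam mu jv) (mRow mu N jv) (dgtA N lam mu (jv+1)) (mRow lam N jv)) n]
      apply Finset.prod_congr rfl
      intro j _
      rw [hEc j, hEs j]
    rw [hp1]
    exact dgt_prod_eval α β x N n lam mu hlam hmu hml hlamle hlamN hconsA
  · intro hnml
    push_neg at hnml
    obtain ⟨i0, hi0⟩ := hnml
    have hi0N : i0 < N := by
      by_contra hc
      have := hmuN i0 (by omega)
      omega
    rw [rowTransferElem]
    apply Finset.sum_eq_zero
    intro e _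
    by_cases h0 : (e (Fin.last n) : ℕ) = 0
    · rw [if_pos h0]
      by_cases hc : ∀ j : Fin n,
          ((e j.castSucc : ℕ) + mRow mu N (j : ℕ) = (e j.succ : ℕ) + mRow lam N (j : ℕ))
      · exfalso
        have hkey := dgt_key0 N n B lam mu hmule hlamle e h0 hc (mu i0 - 1)
          (by have := hmule i0; omega) (by have := hmule i0; omega)
        have hCmu : i0 + 1 ≤ dgtC N mu (mu i0 - 1) := by
          have hsub : Finset.range (i0+1) ⊆
              (Finset.range N).filter (fun i => mu i0 - 1 < mu i) := by
            intro i hi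
            rw [Finset.mem_range] at hi
            simp only [Finset.mem_filter, Finset.mem_range]
            have h := dgt_anti hmu (show i ≤ i0 by omega)
            omega
          have := Finset.card_le_card hsub
          simpa [dgtC] using this
        have hClam : dgtC N lam (mu i0 - 1) ≤ i0 := by
          have hsub : (Finset.range N).filter (fun i => mu i0 - 1 < lam i) ⊆
              Finset.range i0 := by
            intro i hi
            simp only [Finset.mem_filter, Finset.mem_range] at hi
            rw [Finset.mem_range]
            by_contra hc2
            have := dgt_anti hlam (show i0 ≤ i by omega)
            omega
          have := Finset.card_le_card hsub
          simpa [dgtC] using this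
        have hC1 : dgtC N mu (mu i0 - 1) =
            ((Finset.range N).filter (fun i => mu i0 - 1 < mu i)).card := rfl
        have hC2 : dgtC N lam (mu i0 - 1) =
            ((Finset.range N).filter (fun i => mu i0 - 1 < lam i)).card := rfl
        omega
      · push_neg at hc
        obtain ⟨j, hj⟩ := hc
        apply Finset.prod_eq_zero (Finset.mem_univ j)
        rw [dualGrothRowWeight, if_neg hj]
    · rw [if_neg h0]
end

section
/- The row transfer matrix T(x) for canonical Grothendieck polynomials and the column transfer matrix T̃(x) satisfy the inversion relation T(-x)·T̃(x/(1+(α-β)x)) = 1 as operators on the physical space; in particular, for a single site, the matrix elements satisfy: for labels b = d the combined weight is 1, and for b ≠ d the two contributing configurations cancel. -/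
/-- Vertex weights of the bosonic column model for canonical Grothendieck polynomials:
`(x/(1-αx))^a` if `b = c`, `(x/(1-αx))^a·(1+βx)/(1-αx)` if `b > c`, and `0` if `b < c`,
subject to the conservation law. -/
def grothColWeight {F : Type*} [Field F] (α β x : F) (a b c d : ℕ) : F :=
  if a + b = c + d then
    (if b < c then 0
     else if b = c then (x / (1 - α * x)) ^ a
     else (x / (1 - α * x)) ^ a * ((1 + β * x) / (1 - α * x)))
  else 0

namespace GrothInv

variable {F : Type*} [Field F]

open Matrix

lemma rowWeight_eval (α β x : F) (a b c d : ℕ) :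
    grothRowWeight α β (-x) a b c d =
      if a + b = c + d ∧ a ≤ 1 ∧ c ≤ 1 then
        (if a = 1 then -(x / (1 + α * x))
         else if b = 0 then 1 else (1 - β * x) / (1 + α * x))
      else 0 := by
  have e1 : 1 - α * (-x) = 1 + α * x := by ring
  have e2 : 1 + β * (-x) = 1 - β * x := by ring
  rw [grothRowWeight, e1, e2, neg_div]

lemma colWeight_eval (α β x : F) (hβx : 1 - β * x ≠ 0) (hαβx : 1 + (α - β) * x ≠ 0)
    (a b c d : ℕ) :
    grothColWeight α β (x / (1 + (α - β) * x)) a b c d =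
      if a + b = c + d then
        (if b < c then 0
         else if b = c then (x / (1 - β * x)) ^ a
         else (x / (1 - β * x)) ^ a * ((1 + α * x) / (1 - β * x)))
      else 0 := by
  have hd : 1 - α * (x / (1 + (α - β) * x)) = (1 - β * x) / (1 + (α - β) * x) := by
    rw [eq_div_iff hαβx, sub_mul, one_mul, mul_assoc, div_mul_cancel₀ x hαβx]; ring
  have hn : 1 + β * (x / (1 + (α - β) * x)) = (1 + α * x) / (1 + (α - β) * x) := by
    rw [eq_div_iff hαβx, add_mul, one_mul, mul_assoc, div_mul_cancel₀ x hαβx]; ring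
  have h1 : x / (1 + (α - β) * x) / (1 - α * (x / (1 + (α - β) * x))) = x / (1 - β * x) := by
    rw [hd, div_div_div_cancel_right₀ hαβx]
  have h2 : (1 + β * (x / (1 + (α - β) * x))) / (1 - α * (x / (1 + (α - β) * x)))
      = (1 + α * x) / (1 - β * x) := by
    rw [hd, hn, div_div_div_cancel_right₀ hαβx]
  rw [grothColWeight, h1, h2]

/-- The combined one-site transfer matrix: row model at `-x` below, column model at
`x/(1+(α-β)x)` above, with the intermediate vertical label summed over. -/
def Wm (α β x : F) (B b d : ℕ) :
    Matrix (Fin (B + 1) × Fin (B + 1)) (Fin (B + 1) × Fin (B + 1)) F :=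
  fun st en => ∑ m : Fin (B + 1),
    grothRowWeight α β (-x) st.1 b en.1 m *
      grothColWeight α β (x / (1 + (α - β) * x)) st.2 m en.2 d

/-- Since the row weight fixes the intermediate label, the `m`-sum collapses. -/
lemma Wm_apply (α β x : F) (B b d : ℕ) (a c a' c' : Fin (B + 1)) :
    Wm α β x B b d (a, c) (a', c') =
      if (a' : ℕ) ≤ (a : ℕ) + b ∧ (a : ℕ) + b - (a' : ℕ) ≤ B then
        grothRowWeight α β (-x) a b a' ((a : ℕ) + b - a') *
          grothColWeight α β (x / (1 + (α - β) * x)) c ((a : ℕ) + b - a') c' d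
      else 0 := by
  rw [Wm]
  dsimp only
  split_ifs with h
  · rw [Fintype.sum_eq_single (⟨(a : ℕ) + b - (a' : ℕ), by omega⟩ : Fin (B + 1))]
    intro m hm
    rw [rowWeight_eval, if_neg, zero_mul]
    rintro ⟨hcons, -⟩
    apply hm
    have hv : (m : ℕ) = (a : ℕ) + b - (a' : ℕ) := by omega
    exact Fin.ext (by simpa using hv)
  · apply Finset.sum_eq_zero
    intro m _
    rw [rowWeight_eval, if_neg, zero_mul]
    rintro ⟨hcons, -⟩
    have hmlt := m.isLt
    omega



/-- The standard basis vector at the state `(0,0)`. -/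
def e0 {B : ℕ} : Fin (B + 1) × Fin (B + 1) → F := fun s => if s = (0, 0) then 1 else 0

/-- The "defect" vector produced by a single mismatched site. -/
def bv (p : F) {B : ℕ} (D : ℕ) : Fin (B + 1) × Fin (B + 1) → F := fun s =>
  if (s.1 : ℕ) = 0 ∧ (s.2 : ℕ) = D then p ^ D
  else if (s.1 : ℕ) = 1 ∧ (s.2 : ℕ) = D - 1 then -p ^ D else 0

lemma mulVec_e0 {B : ℕ} (M : Matrix (Fin (B + 1) × Fin (B + 1)) (Fin (B + 1) × Fin (B + 1)) F)
    (s : Fin (B + 1) × Fin (B + 1)) : (M *ᵥ e0) s = M s (0, 0) := by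
  simp [Matrix.mulVec, dotProduct, e0, mul_ite, mul_one, mul_zero]

lemma sum_e0 {B : ℕ} : ∑ s : Fin (B + 1) × Fin (B + 1), (e0 (F := F) s) = 1 := by
  simp [e0]

lemma bv_eq (p : F) {B D : ℕ} (h1 : 1 ≤ D) (hD : D ≤ B) :
    bv p (B := B) D = fun s =>
      (if s = ((⟨0, by omega⟩ : Fin (B + 1)), (⟨D, by omega⟩ : Fin (B + 1))) then p ^ D else 0)
      + (if s = ((⟨1, by omega⟩ : Fin (B + 1)), (⟨D - 1, by omega⟩ : Fin (B + 1))) then -p ^ D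
         else 0) := by
  funext s
  obtain ⟨⟨s1, hs1⟩, ⟨s2, hs2⟩⟩ := s
  simp only [bv, Prod.mk.injEq, Fin.mk.injEq, Fin.ext_iff, Prod.ext_iff]
  split_ifs <;> (try omega) <;> (try ring) <;> exfalso <;> omega

lemma sum_bv {B D : ℕ} (p : F) (h1 : 1 ≤ D) (hD : D ≤ B) :
    ∑ s : Fin (B + 1) × Fin (B + 1), bv p D s = 0 := by
  rw [bv_eq p h1 hD]
  rw [Finset.sum_add_distrib]
  rw [Finset.sum_ite_eq', Finset.sum_ite_eq']
  simp

lemma row_shift (α β x : F) (a b m : ℕ) (h1 : 1 ≤ m) :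
    grothRowWeight α β (-x) a b 0 m = grothRowWeight α β (-x) a b 1 (m - 1) := by
  rw [rowWeight_eval, rowWeight_eval]
  have hcc : (a + b = 0 + m ∧ a ≤ 1 ∧ 0 ≤ 1) = (a + b = 1 + (m - 1) ∧ a ≤ 1 ∧ 1 ≤ 1) := by
    apply propext
    constructor <;> (rintro ⟨h1', h2', -⟩; exact ⟨by omega, h2', by omega⟩)
  simp only [hcc]

lemma col_shift (α β x : F) (hβx : 1 - β * x ≠ 0) (hαβx : 1 + (α - β) * x ≠ 0)
    (c m D d : ℕ) (hm : 1 ≤ m) (hD : 1 ≤ D) :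
    grothColWeight α β (x / (1 + (α - β) * x)) c m D d
      = grothColWeight α β (x / (1 + (α - β) * x)) c (m - 1) (D - 1) d := by
  rw [colWeight_eval α β x hβx hαβx, colWeight_eval α β x hβx hαβx]
  have e1 : (c + m = D + d) = (c + (m - 1) = D - 1 + d) := by
    apply propext; constructor <;> intro <;> omega
  have e2 : (m < D) = (m - 1 < D - 1) := by
    apply propext; constructor <;> intro <;> omega
  have e3 : (m = D) = (m - 1 = D - 1) := by
    apply propext; constructor <;> intro <;> omega
  simp only [e1, e2, e3]

/-- Matched site: the combined transfer matrix fixes `e0`. -/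
lemma Wm_match (α β x : F) (hαx : 1 + α * x ≠ 0) (hβx : 1 - β * x ≠ 0)
    (hαβx : 1 + (α - β) * x ≠ 0) (B b : ℕ) (hb : b ≤ B) :
    Wm α β x B b b *ᵥ e0 = (e0 : Fin (B + 1) × Fin (B + 1) → F) := by
  have hrq : ((1 - β * x) / (1 + α * x)) * ((1 + α * x) / (1 - β * x)) = 1 := by
    rw [div_mul_div_comm, mul_comm (1 - β * x), div_self (mul_ne_zero hαx hβx)]
  funext s
  obtain ⟨a, c⟩ := s
  rw [mulVec_e0, Wm_apply]
  simp only [Fin.val_zero, Nat.sub_zero, Nat.zero_le, true_and]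
  have hE : (((a, c) : Fin (B + 1) × Fin (B + 1)) = (0, 0)) ↔ ((a : ℕ) = 0 ∧ (c : ℕ) = 0) := by
    simp only [Prod.mk.injEq, Fin.ext_iff, Fin.val_zero]
  by_cases hac : (a : ℕ) = 0 ∧ (c : ℕ) = 0
  · simp only [e0]
    rw [if_pos (hE.mpr hac), if_pos (by omega)]
    rw [rowWeight_eval, colWeight_eval α β x hβx hαβx, hac.1, hac.2]
    by_cases hb0 : b = 0
    · subst hb0; norm_num
    · rw [if_pos (by omega), if_neg (by omega), if_neg hb0,
        if_pos (by omega), if_neg (by omega), if_neg (by omega)]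
      rw [pow_zero, one_mul]
      exact hrq
  · simp only [e0]
    rw [if_neg (fun h => hac (hE.mp h))]
    split_ifs with h0
    · rw [colWeight_eval α β x hβx hαβx, if_neg (by omega), mul_zero]
    · rfl

/-- Mismatched site on `e0`, bottom label larger: the result vanishes. -/
lemma Wm_kill0 (α β x : F) (hβx : 1 - β * x ≠ 0) (hαβx : 1 + (α - β) * x ≠ 0)
    (B b d : ℕ) (hdb : d < b) :
    Wm α β x B b d *ᵥ e0 = (0 : Fin (B + 1) × Fin (B + 1) → F) := by
  funext s
  obtain ⟨a, c⟩ := s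
  rw [mulVec_e0, Wm_apply]
  simp only [Fin.val_zero, Nat.sub_zero, Nat.zero_le, true_and, Pi.zero_apply]
  split_ifs with h0
  · rw [colWeight_eval α β x hβx hαβx, if_neg (by omega), mul_zero]
  · rfl

/-- Mismatched site on `e0`, top label larger: the result is the defect vector. -/
lemma Wm_mismatch (α β x : F) (hαx : 1 + α * x ≠ 0) (hβx : 1 - β * x ≠ 0)
    (hαβx : 1 + (α - β) * x ≠ 0) (B b D : ℕ) (hb : b < B) (hD1 : 1 ≤ D) (hdB : b + D ≤ B) :
    Wm α β x B b (b + D) *ᵥ e0 = bv (x / (1 - β * x)) D := by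
  have hrq : ((1 - β * x) / (1 + α * x)) * ((1 + α * x) / (1 - β * x)) = 1 := by
    rw [div_mul_div_comm, mul_comm (1 - β * x), div_self (mul_ne_zero hαx hβx)]
  have hpq : (x / (1 + α * x)) * ((1 + α * x) / (1 - β * x)) = x / (1 - β * x) := by
    rw [div_mul_div_comm, mul_comm (1 + α * x) (1 - β * x), mul_div_mul_right _ _ hαx]
  obtain ⟨k, rfl⟩ : ∃ k, D = k + 1 := ⟨D - 1, by omega⟩
  funext s
  obtain ⟨a, c⟩ := s
  rw [mulVec_e0, Wm_apply, bv]
  simp only [Fin.val_zero, Nat.sub_zero, Nat.zero_le, true_and, Nat.add_sub_cancel]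
  by_cases h1 : (a : ℕ) = 0 ∧ (c : ℕ) = k + 1
  · rw [if_pos h1, h1.1, h1.2, if_pos (by omega)]
    rw [rowWeight_eval, colWeight_eval α β x hβx hαβx]
    by_cases hb0 : b = 0
    · subst hb0
      norm_num
    · rw [if_pos (by omega), if_neg (by omega), if_neg hb0,
        if_pos (by omega), if_neg (by omega), if_neg (by omega)]
      rw [show (1 - β * x) / (1 + α * x) * ((x / (1 - β * x)) ^ (k + 1) * ((1 + α * x) / (1 - β * x)))
          = (x / (1 - β * x)) ^ (k + 1) * (((1 - β * x) / (1 + α * x)) * ((1 + α * x) / (1 - β * x)))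
        from by ring, hrq, mul_one]
  · rw [if_neg h1]
    by_cases h2 : (a : ℕ) = 1 ∧ (c : ℕ) = k
    · rw [if_pos h2, h2.1, h2.2, if_pos (by omega)]
      rw [rowWeight_eval, colWeight_eval α β x hβx hαβx]
      rw [if_pos (by omega), if_pos rfl, if_pos (by omega), if_neg (by omega), if_neg (by omega)]
      rw [show -(x / (1 + α * x)) * ((x / (1 - β * x)) ^ k * ((1 + α * x) / (1 - β * x)))
          = -((x / (1 - β * x)) ^ k * ((x / (1 + α * x)) * ((1 + α * x) / (1 - β * x))))
        from by ring, hpq, pow_succ]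
    · rw [if_neg h2]
      split_ifs with h0
      · by_cases hA : (a : ℕ) ≤ 1
        · rw [colWeight_eval α β x hβx hαβx, if_neg (by omega), mul_zero]
        · rw [rowWeight_eval, if_neg (by rintro ⟨-, h, -⟩; omega), zero_mul]
      · rfl

/-- Any site annihilates the defect vector. -/
lemma Wm_kill (α β x : F) (hβx : 1 - β * x ≠ 0) (hαβx : 1 + (α - β) * x ≠ 0)
    (B b d D : ℕ) (hb : b < B) (hD1 : 1 ≤ D) (hD : D ≤ B) :
    Wm α β x B b d *ᵥ bv (x / (1 - β * x)) D = (0 : Fin (B + 1) × Fin (B + 1) → F) := by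
  funext s
  obtain ⟨a, c⟩ := s
  rw [Matrix.mulVec, bv_eq _ hD1 hD]
  simp only [dotProduct, mul_add, mul_ite, mul_zero, mul_neg,
    Finset.sum_add_distrib, Finset.sum_ite_eq', Finset.mem_univ, if_true, Pi.zero_apply]
  have hW : Wm α β x B b d (a, c) (⟨0, by omega⟩, ⟨D, by omega⟩)
      = Wm α β x B b d (a, c) (⟨1, by omega⟩, ⟨D - 1, by omega⟩) := by
    rw [Wm_apply, Wm_apply]
    simp only [Fin.val_mk, Nat.sub_zero]
    by_cases hA : (a : ℕ) ≤ 1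
    · by_cases hab1 : 1 ≤ (a : ℕ) + b
      · rw [if_pos (show 0 ≤ (a : ℕ) + b ∧ (a : ℕ) + b ≤ B from ⟨by omega, by omega⟩),
          if_pos (show 1 ≤ (a : ℕ) + b ∧ (a : ℕ) + b - 1 ≤ B from ⟨hab1, by omega⟩),
          row_shift α β x _ _ _ hab1, col_shift α β x hβx hαβx _ _ _ _ hab1 hD1]
      · have ha0 : (a : ℕ) + b = 0 := by omega
        rw [if_neg (show ¬(1 ≤ (a : ℕ) + b ∧ (a : ℕ) + b - 1 ≤ B) from by omega),
          if_pos (show 0 ≤ (a : ℕ) + b ∧ (a : ℕ) + b ≤ B from ⟨by omega, by omega⟩)]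
        rw [colWeight_eval α β x hβx hαβx]
        by_cases hcc : (c : ℕ) + ((a : ℕ) + b) = D + d
        · rw [if_pos hcc, if_pos (by omega), mul_zero]
        · rw [if_neg hcc, mul_zero]
    · have hw1 : ∀ a' m : ℕ, grothRowWeight α β (-x) (a : ℕ) b a' m = 0 := by
        intro a' m
        rw [rowWeight_eval, if_neg]
        rintro ⟨-, h, -⟩
        omega
      rw [hw1, hw1, zero_mul, zero_mul, ite_self, ite_self]
  rw [hW]
  ring

/-- A boundary-weighted path sum equals a matrix element of the product of the
site matrices. -/
lemma pathSum {S : Type*} [Fintype S] [DecidableEq S] :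
    ∀ (n : ℕ) (A : Fin n → Matrix S S F) (v : S → F) (t : S),
      (∑ e : Fin (n + 1) → S,
          if e (Fin.last n) = t then
            v (e 0) * ∏ j : Fin n, A j (e j.castSucc) (e j.succ)
          else 0)
        = ∑ s : S, v s * (List.ofFn A).prod s t := by
  intro n
  induction n with
  | zero =>
    intro A v t
    rw [← (Equiv.funUnique (Fin 1) S).symm.sum_comp]
    simp [Equiv.funUnique, Matrix.one_apply, mul_ite, mul_one, mul_zero]
  | succ n ih =>
    intro A v t
    rw [← (Fin.consEquiv (fun _ : Fin (n + 2) => S)).sum_comp]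
    rw [Fintype.sum_prod_type]
    simp only [Fin.consEquiv_apply]
    simp only [← Fin.succ_last, Fin.cons_succ, Fin.cons_zero, Fin.prod_univ_succ,
      Fin.castSucc_zero, ← Fin.succ_castSucc, ← mul_assoc]
    rw [Finset.sum_comm]
    have hswap : ∀ e' : Fin (n + 1) → S,
        (∑ s0 : S, if e' (Fin.last n) = t then
            v s0 * A 0 s0 (e' 0) * ∏ j : Fin n, A j.succ (e' j.castSucc) (e' j.succ)
          else 0)
        = (if e' (Fin.last n) = t then
            (∑ s0 : S, v s0 * A 0 s0 (e' 0)) * ∏ j : Fin n, A j.succ (e' j.castSucc) (e' j.succ)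
          else 0) := by
      intro e'
      split_ifs with h
      · rw [Finset.sum_mul]
      · simp
    rw [Finset.sum_congr rfl (fun e' _ => hswap e')]
    rw [ih (fun j => A j.succ) (fun s => ∑ s0 : S, v s0 * A 0 s0 s) t]
    rw [List.ofFn_succ, List.prod_cons]
    simp only [Matrix.mul_apply, Finset.mul_sum, Finset.sum_mul, ← mul_assoc]
    rw [Finset.sum_comm]

/-- The product of combined site matrices applied to `e0`: identity on matched
labels, and a killable defect (or zero) as soon as there is a mismatch. -/
lemma prod_Wm (α β x : F) (hαx : 1 + α * x ≠ 0) (hβx : 1 - β * x ≠ 0)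
    (hαβx : 1 + (α - β) * x ≠ 0) (B : ℕ) :
    ∀ (n : ℕ) (bot top : ℕ → ℕ), (∀ j < n, bot j < B) →
      (∑ j ∈ Finset.range n, top j) ≤ B →
      (if ∀ j < n, bot j = top j
       then (List.ofFn fun j : Fin n => Wm α β x B (bot j) (top j)).prod *ᵥ e0
             = (e0 : Fin (B + 1) × Fin (B + 1) → F)
       else ((List.ofFn fun j : Fin n => Wm α β x B (bot j) (top j)).prod *ᵥ e0 = 0 ∨
             ∃ D, 1 ≤ D ∧ D ≤ B ∧
               (List.ofFn fun j : Fin n => Wm α β x B (bot j) (top j)).prod *ᵥ e0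
                 = bv (x / (1 - β * x)) D)) := by
  intro n
  induction n with
  | zero =>
    intro bot top _ _
    rw [if_pos (fun j hj => absurd hj (by omega))]
    simp [Matrix.one_mulVec]
  | succ n ih =>
    intro bot top hbot htop
    have hbot' : ∀ j < n, bot (j + 1) < B := fun j hj => hbot (j + 1) (by omega)
    have hsum := Finset.sum_range_succ' top n
    have htop' : (∑ j ∈ Finset.range n, top (j + 1)) ≤ B := by omega
    have htop0 : top 0 ≤ B := by omega
    have hrec := ih (fun j => bot (j + 1)) (fun j => top (j + 1)) hbot' htop'
    rw [List.ofFn_succ, List.prod_cons]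
    simp only [Fin.val_succ, Fin.val_zero, ← Matrix.mulVec_mulVec]
    by_cases hm : ∀ j < n, bot (j + 1) = top (j + 1)
    · rw [if_pos hm] at hrec
      rw [hrec]
      by_cases h0 : bot 0 = top 0
      · rw [if_pos (show ∀ j < n + 1, bot j = top j by
            intro j hj
            rcases j with _ | j
            exacts [h0, hm j (by omega)]), h0]
        exact Wm_match α β x hαx hβx hαβx B (top 0) htop0
      · rw [if_neg (fun h => h0 (h 0 (by omega)))]
        rcases Nat.lt_or_ge (bot 0) (top 0) with hlt | hge
        · right
          refine ⟨top 0 - bot 0, by omega, by omega, ?_⟩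
          have hmis := Wm_mismatch α β x hαx hβx hαβx B (bot 0) (top 0 - bot 0)
            (hbot 0 (by omega)) (by omega) (by omega)
          rw [show bot 0 + (top 0 - bot 0) = top 0 from by omega] at hmis
          exact hmis
        · left
          exact Wm_kill0 α β x hβx hαβx B (bot 0) (top 0) (by omega)
    · have hne : ¬∀ j < n + 1, bot j = top j := fun h => hm (fun j hj => h (j + 1) (by omega))
      rw [if_neg hne]
      rw [if_neg hm] at hrec
      left
      rcases hrec with h0 | ⟨D, hD1, hDB, hbv⟩
      · rw [h0, Matrix.mulVec_zero]
      · rw [hbv]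
        exact Wm_kill α β x hβx hαβx B (bot 0) (top 0) D (hbot 0 (by omega)) hD1 hDB

/-- Combining the two transfer-matrix rows and summing the intermediate labels
gives a boundary matrix element of the product of combined site matrices. -/
lemma reduction (α β x : F) (B n : ℕ) (bot top : ℕ → ℕ) :
    (∑ mid : Fin n → Fin (B + 1),
        (∑ e : Fin (n + 1) → Fin (B + 1),
          if (e (Fin.last n) : ℕ) = 0 then
            ∏ j : Fin n, grothRowWeight α β (-x) (e j.castSucc) (bot j) (e j.succ) (mid j)
          else 0) *
        (∑ e : Fin (n + 1) → Fin (B + 1),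
          if (e (Fin.last n) : ℕ) = 0 then
            ∏ j : Fin n, grothColWeight α β (x / (1 + (α - β) * x)) (e j.castSucc) (mid j)
              (e j.succ) (top j)
          else 0))
      = ∑ s : Fin (B + 1) × Fin (B + 1),
          (List.ofFn fun j : Fin n => Wm α β x B (bot j) (top j)).prod s (0, 0) := by
  have step1 : (∑ mid : Fin n → Fin (B + 1),
        (∑ e : Fin (n + 1) → Fin (B + 1),
          if (e (Fin.last n) : ℕ) = 0 then
            ∏ j : Fin n, grothRowWeight α β (-x) (e j.castSucc) (bot j) (e j.succ) (mid j)
          else 0) *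
        (∑ e : Fin (n + 1) → Fin (B + 1),
          if (e (Fin.last n) : ℕ) = 0 then
            ∏ j : Fin n, grothColWeight α β (x / (1 + (α - β) * x)) (e j.castSucc) (mid j)
              (e j.succ) (top j)
          else 0))
      = ∑ e1 : Fin (n + 1) → Fin (B + 1), ∑ e2 : Fin (n + 1) → Fin (B + 1),
          (if ((e1 (Fin.last n) : ℕ) = 0 ∧ (e2 (Fin.last n) : ℕ) = 0) then
            ∏ j : Fin n, Wm α β x B (bot j) (top j)
              (e1 j.castSucc, e2 j.castSucc) (e1 j.succ, e2 j.succ)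
          else 0) := by
    rw [show (∑ mid : Fin n → Fin (B + 1),
        (∑ e : Fin (n + 1) → Fin (B + 1),
          if (e (Fin.last n) : ℕ) = 0 then
            ∏ j : Fin n, grothRowWeight α β (-x) (e j.castSucc) (bot j) (e j.succ) (mid j)
          else 0) *
        (∑ e : Fin (n + 1) → Fin (B + 1),
          if (e (Fin.last n) : ℕ) = 0 then
            ∏ j : Fin n, grothColWeight α β (x / (1 + (α - β) * x)) (e j.castSucc) (mid j)
              (e j.succ) (top j)
          else 0))
      = ∑ e1 : Fin (n + 1) → Fin (B + 1), ∑ e2 : Fin (n + 1) → Fin (B + 1),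
          ∑ mid : Fin n → Fin (B + 1),
          (if (e1 (Fin.last n) : ℕ) = 0 then
            ∏ j : Fin n, grothRowWeight α β (-x) (e1 j.castSucc) (bot j) (e1 j.succ) (mid j)
          else 0) *
          (if (e2 (Fin.last n) : ℕ) = 0 then
            ∏ j : Fin n, grothColWeight α β (x / (1 + (α - β) * x)) (e2 j.castSucc) (mid j)
              (e2 j.succ) (top j)
          else 0) from by
        rw [Finset.sum_congr rfl fun mid _ => Finset.sum_mul_sum _ _ _ _, Finset.sum_comm]
        exact Finset.sum_congr rfl fun e1 _ => Finset.sum_comm]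
    refine Finset.sum_congr rfl fun e1 _ => Finset.sum_congr rfl fun e2 _ => ?_
    by_cases hc : ((e1 (Fin.last n) : ℕ) = 0 ∧ (e2 (Fin.last n) : ℕ) = 0)
    · rw [if_pos hc]
      rw [Finset.sum_congr rfl fun mid _ => by rw [if_pos hc.1, if_pos hc.2,
        ← Finset.prod_mul_distrib]]
      simp only [Wm]
      rw [Fintype.prod_sum]
    · rw [if_neg hc]
      apply Finset.sum_eq_zero
      intro mid _
      by_cases h1 : (e1 (Fin.last n) : ℕ) = 0
      · rw [if_neg (fun h2 => hc ⟨h1, h2⟩), mul_zero]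
      · rw [if_neg h1, zero_mul]
  rw [step1, ← Fintype.sum_prod_type',
    ← (Equiv.arrowProdEquivProdArrow (Fin (n + 1)) (fun _ => Fin (B + 1)) (fun _ => Fin (B + 1))).sum_comp]
  have hps := pathSum (F := F) n (fun j => Wm α β x B (bot j) (top j)) (fun _ => (1 : F))
    ((0 : Fin (B + 1)), (0 : Fin (B + 1)))
  simp only [one_mul] at hps
  rw [← hps]
  refine Finset.sum_congr rfl fun e _ => ?_
  simp only [Equiv.arrowProdEquivProdArrow, Equiv.coe_fn_mk]
  have hcond : (((e (Fin.last n)).1 : ℕ) = 0 ∧ ((e (Fin.last n)).2 : ℕ) = 0)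
      ↔ e (Fin.last n) = ((0 : Fin (B + 1)), (0 : Fin (B + 1))) := by
    simp only [Prod.ext_iff, Fin.ext_iff, Fin.val_zero]
  exact if_congr hcond (Finset.prod_congr rfl fun j _ => by rw [Prod.mk.eta, Prod.mk.eta]) rfl

end GrothInv

/-- Inversion relation `T(-x)·T̃(x/(1+(α-β)x)) = 1` between the row transfer matrix
`T` for canonical Grothendieck polynomials and the column transfer matrix `T̃`, stated
on matrix elements of the physical space: stacking a `T(-x)` row (bottom) with a
`T̃(x/(1+(α-β)x))` row (top) and summing over the intermediate vertical labels gives the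
identity operator, i.e. `1` if the bottom labels equal the top labels and `0` otherwise.
In particular for a single site (`n = 1`), for labels `b = d` the combined weight is `1`,
and for `b ≠ d` the two contributing configurations cancel. -/
theorem groth_row_column_inversion {F : Type*} [Field F] (α β x : F)
    (hαx : 1 + α * x ≠ 0) (hβx : 1 - β * x ≠ 0) (hαβx : 1 + (α - β) * x ≠ 0)
    (n B : ℕ) (bot top : ℕ → ℕ)
    (hbot : ∀ j, j < n → bot j < B) (htop : (∑ j ∈ Finset.range n, top j) ≤ B) :
    (∑ mid : Fin n → Fin (B + 1),
        rowTransferElem (grothRowWeight α β (-x)) n B bot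
            (fun j => if h : j < n then (mid ⟨j, h⟩ : ℕ) else 0) 0 *
          rowTransferElem (grothColWeight α β (x / (1 + (α - β) * x))) n B
            (fun j => if h : j < n then (mid ⟨j, h⟩ : ℕ) else 0) top 0)
      = if ∀ j < n, bot j = top j then 1 else 0 := by
  classical
  simp only [rowTransferElem, Fin.is_lt, dite_true, Fin.eta]
  rw [GrothInv.reduction α β x B n bot top]
  have hP := GrothInv.prod_Wm α β x hαx hβx hαβx B n bot top hbot htop
  have hE : ∀ s : Fin (B + 1) × Fin (B + 1),
      (List.ofFn fun j : Fin n => GrothInv.Wm α β x B (bot j) (top j)).prod s (0, 0)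
        = Matrix.mulVec ((List.ofFn fun j : Fin n => GrothInv.Wm α β x B (bot j) (top j)).prod)
            GrothInv.e0 s :=
    fun s => (GrothInv.mulVec_e0 _ s).symm
  rw [Finset.sum_congr rfl fun s _ => hE s]
  split_ifs at hP ⊢ with hmatch
  · rw [hP]
    exact GrothInv.sum_e0
  · rcases hP with h0 | ⟨D, hD1, hDB, hbv⟩
    · rw [h0]
      simp
    · rw [hbv]
      exact GrothInv.sum_bv _ hD1 hDB
end

section
/- For a horizontal strip λ/μ, the quantity r(μ/λ̄) (the number of nonzero rows of the skew shape μ/λ̄ where λ̄=(λ₂,λ₃,…)) equals the number of removable boxes of μ that do not lie in the same column as any box of λ/μ. -/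
/-- For a horizontal strip `λ/μ` (partitions `μ ⊆ λ` with `λ_{i+1} ≤ μ_i` for all `i`),
the number `r(μ/λ̄)` of nonzero rows of the skew shape `μ/λ̄` (where `λ̄ = (λ₂,λ₃,…)`),
i.e. the number of indices `i` with `μ_i > λ_{i+1}`, equals the number of removable
boxes of `μ` that do not lie in the same column as any box of `λ/μ`.  A removable box
of `μ` sits at the end of a row `i` with `μ_i > 0` and `μ_i > μ_{i+1}`, in column `μ_i`;
the column `c` contains a box of `λ/μ` iff `μ_r < c ≤ λ_r` for some row `r`. -/
theorem horizontal_strip_removable_boxes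
    (lam mu : ℕ → ℕ)
    (hlam : ∀ i, lam (i + 1) ≤ lam i) (hmu : ∀ i, mu (i + 1) ≤ mu i)
    (hfin : ∃ N, ∀ i, N ≤ i → lam i = 0)
    (hsub : ∀ i, mu i ≤ lam i) (hstrip : ∀ i, lam (i + 1) ≤ mu i) :
    {i : ℕ | lam (i + 1) < mu i}.ncard
      = {i : ℕ | 0 < mu i ∧ mu (i + 1) < mu i ∧
          ∀ r, ¬ (mu r < mu i ∧ mu i ≤ lam r)}.ncard := by
  have hAl : Antitone lam := antitone_nat_of_succ_le hlam
  have hAm : Antitone mu := antitone_nat_of_succ_le hmu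
  congr 1
  ext i
  simp only [Set.mem_setOf_eq]
  constructor
  · intro h
    have h1 : mu (i + 1) ≤ lam (i + 1) := hsub (i + 1)
    refine ⟨lt_of_le_of_lt (Nat.zero_le _) h, lt_of_le_of_lt h1 h, ?_⟩
    rintro r ⟨hr1, hr2⟩
    rcases le_or_gt r i with hle | hlt
    · exact absurd hr1 (not_lt.2 (hAm hle))
    · have : lam r ≤ lam (i + 1) := hAl hlt
      omega
  · rintro ⟨h0, h1, h2⟩
    have := h2 (i + 1)
    omega
end
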